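/- arXiv:2210.13682 — 3 statements merged into one kernel-verified Lean document; each statement's English description precedes it below -/
import Mathlib

section
/- Let A and B be graph-consistent hashgraphs on n parties, with at most t corrupted parties where 3t < n, and suppose no two events created by the same honest party form a fork. If events x and y form a fork and some event z contained in A strongly sees x in A, then no event contained in B strongly sees y in B. -/
open Classical

attribute [local instance] Classical.propDecidable

noncomputable section

/-- A hashgraph: a finite set of events together with (optional) self-parent and
other-parent pointers, a round assignment and a vote function
(`vote y x` is the vote cast by witness `y` in the famousness election of witness `x`).
Events are identified across hashgraphs: they come from a common type `E`, and their
creator, signature and timestamp are given by globally fixed functions `E → ℕ`. -/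
structure Hashgraph (E : Type) where
  events : Finset E
  selfParent : E → Option E
  otherParent : E → Option E
  round : E → ℕ
  vote : E → E → Bool

namespace Hashgraph

variable {E : Type}

/-- `H.Parent x y` : `y` is a parent of `x` in `H`. -/
def Parent (H : Hashgraph E) (x y : E) : Prop :=
  H.selfParent x = some y ∨ H.otherParent x = some y

/-- `H.Ancestor y x` : `y` is an ancestor of `x` in `H` (reflexively). -/
def Ancestor (H : Hashgraph E) (y x : E) : Prop :=
  Relation.ReflTransGen H.Parent x y

/-- `H.SelfAncestor y x` : `y` is a self-ancestor of `x` in `H` (reflexively). -/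
def SelfAncestor (H : Hashgraph E) (y x : E) : Prop :=
  Relation.ReflTransGen (fun a b => H.selfParent a = some b) x y

/-- `(x, y)` is a fork in `H`: same creator, neither an ancestor of the other. -/
def Fork (creator : E → ℕ) (H : Hashgraph E) (x y : E) : Prop :=
  creator x = creator y ∧ ¬ H.Ancestor x y ∧ ¬ H.Ancestor y x

/-- `x` observes a fork from party `p` in `H`. -/
def ObservesForkFrom (creator : E → ℕ) (H : Hashgraph E) (x : E) (p : ℕ) : Prop :=
  ∃ z z', H.Ancestor z x ∧ H.Ancestor z' x ∧ creator z = p ∧ creator z' = p ∧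
    Fork creator H z z'

/-- `x` sees `y` in `H`. -/
def Sees (creator : E → ℕ) (H : Hashgraph E) (x y : E) : Prop :=
  H.Ancestor y x ∧ ¬ ObservesForkFrom creator H x (creator y)

/-- `x` strongly sees `y` in `H`: `x` sees more than `2n/3` events with pairwise
distinct creators, each of which sees `y`. -/
def StronglySees (creator : E → ℕ) (n : ℕ) (H : Hashgraph E) (x y : E) : Prop :=
  ∃ S : Finset E, (↑S : Set E) ⊆ (↑H.events : Set E) ∧
    (∀ z ∈ S, Sees creator H x z ∧ Sees creator H z y) ∧
    Set.InjOn creator ↑S ∧ 2 * n < 3 * S.card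

/-- An event is a witness if it has no self-parent or its round exceeds its
self-parent's round. -/
def Witness (H : Hashgraph E) (x : E) : Prop :=
  x ∈ H.events ∧ ∀ y, H.selfParent x = some y → H.round y < H.round x

/-- The maximum round among the parents of `x` (0 for a missing parent). -/
def maxParentRound (H : Hashgraph E) (x : E) : ℕ :=
  max (match H.selfParent x with | some y => H.round y | none => 0)
      (match H.otherParent x with | some y => H.round y | none => 0)

/-- `x` strongly sees more than `2n/3` round-`r` witnesses with distinct creators. -/
def PromotedAt (creator : E → ℕ) (n : ℕ) (H : Hashgraph E) (x : E) (r : ℕ) : Prop :=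
  ∃ S : Finset E, (↑S : Set E) ⊆ (↑H.events : Set E) ∧
    (∀ w ∈ S, H.Witness w ∧ H.round w = r ∧ StronglySees creator n H x w) ∧
    Set.InjOn creator ↑S ∧ 2 * n < 3 * S.card

/-- The set of round-`r` witnesses strongly seen by `y`. -/
def ssWitnesses (creator : E → ℕ) (n : ℕ) (H : Hashgraph E) (y : E) (r : ℕ) : Finset E :=
  H.events.filter (fun w => H.Witness w ∧ H.round w = r ∧ StronglySees creator n H y w)

/-- The majority vote in `x`'s election among the events of `s` (`true` i.e. yes on a tie). -/
def majorityVote (H : Hashgraph E) (x : E) (s : Finset E) : Bool :=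
  decide (s.card ≤ 2 * (s.filter (fun w => H.vote w x = true)).card)

/-- The middle bit of a signature. -/
def middleBit (s : ℕ) : Bool := s.testBit (s.size / 2)

/-- Validity of a hashgraph on `n` parties with coin-round period `c`, with respect to
globally fixed creators, signatures and timestamps: creators lie in `{1, …, n}`,
parents of events are events, a self-parent has the same creator, an other-parent a
different one, the graph is acyclic, rounds satisfy the recursive round assignment,
and votes satisfy the recursive voting rule of famousness elections. -/
structure Valid (creator sig ts : E → ℕ) (n c : ℕ) (H : Hashgraph E) : Prop where
  creator_mem : ∀ x ∈ H.events, 1 ≤ creator x ∧ creator x ≤ n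
  selfParent_mem : ∀ x ∈ H.events, ∀ y, H.selfParent x = some y → y ∈ H.events
  otherParent_mem : ∀ x ∈ H.events, ∀ y, H.otherParent x = some y → y ∈ H.events
  selfParent_creator : ∀ x ∈ H.events, ∀ y, H.selfParent x = some y → creator y = creator x
  otherParent_creator : ∀ x ∈ H.events, ∀ y, H.otherParent x = some y → creator y ≠ creator x
  acyclic : ∀ x ∈ H.events, ∀ y ∈ H.events, H.Ancestor x y → H.Ancestor y x → x = y
  round_genesis : ∀ x ∈ H.events, H.selfParent x = none → H.otherParent x = none →
    H.round x = 1
  round_spec : ∀ x ∈ H.events, (H.selfParent x ≠ none ∨ H.otherParent x ≠ none) →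
    H.round x = if PromotedAt creator n H x (H.maxParentRound x)
      then H.maxParentRound x + 1 else H.maxParentRound x
  vote_first : ∀ x ∈ H.events, H.Witness x → ∀ y ∈ H.events, H.Witness y →
    H.round y = H.round x + 1 → H.vote y x = decide (Sees creator H y x)
  vote_later : ∀ x ∈ H.events, H.Witness x → ∀ y ∈ H.events, H.Witness y →
    H.round x + 1 < H.round y →
    H.vote y x =
      if ¬ (c ∣ (H.round y - H.round x)) then
        majorityVote H x (ssWitnesses creator n H y (H.round y - 1))
      else if 2 * n < 3 * ((ssWitnesses creator n H y (H.round y - 1)).filter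
          (fun w => H.vote w x = majorityVote H x (ssWitnesses creator n H y (H.round y - 1)))).card then
        majorityVote H x (ssWitnesses creator n H y (H.round y - 1))
      else middleBit (sig y)

/-- `A` and `B` are graph-consistent: every event contained in both has the same
parent pointers and the same ancestors in `A` and in `B`. -/
def GraphConsistent (A B : Hashgraph E) : Prop :=
  ∀ x, x ∈ A.events → x ∈ B.events →
    A.selfParent x = B.selfParent x ∧ A.otherParent x = B.otherParent x ∧
    ∀ y, (A.Ancestor y x ↔ B.Ancestor y x)

/-- `H` decides the fame of the witness `x` to be `v`. -/
def Decides (creator : E → ℕ) (n c : ℕ) (H : Hashgraph E) (x : E) (v : Bool) : Prop :=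
  H.Witness x ∧ ∃ y ∈ H.events, H.Witness y ∧ H.round x + 2 ≤ H.round y ∧
    ¬ (c ∣ (H.round y - H.round x)) ∧
    2 * n < 3 * ((ssWitnesses creator n H y (H.round y - 1)).filter
      (fun w => H.vote w x = v)).card

/-- `x` is a unique famous witness of `H`: famous, and the only famous witness
with its creator and round. -/
def UniqueFamous (creator : E → ℕ) (n c : ℕ) (H : Hashgraph E) (x : E) : Prop :=
  Decides creator n c H x true ∧
    ∀ y ∈ H.events, Decides creator n c H y true → creator y = creator x →
      H.round y = H.round x → y = x

/-- The defining property of `roundReceived R` (without minimality): the fame of every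
witness of round at most `R` has been decided, and every round-`R` unique famous
witness sees `x`. -/
def RRAt (creator : E → ℕ) (n c : ℕ) (H : Hashgraph E) (x : E) (R : ℕ) : Prop :=
  (∀ w ∈ H.events, H.Witness w → H.round w ≤ R → ∃ v, Decides creator n c H w v) ∧
  (∀ w ∈ H.events, UniqueFamous creator n c H w → H.round w = R → Sees creator H w x)

/-- `x` has roundReceived `R` in `H`: `R` is the least round satisfying `RRAt`. -/
def RoundReceived (creator : E → ℕ) (n c : ℕ) (H : Hashgraph E) (x : E) (R : ℕ) : Prop :=
  RRAt creator n c H x R ∧ ∀ R' < R, ¬ RRAt creator n c H x R'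

/-- The median of a multiset of naturals. -/
def medianOf (l : Multiset ℕ) : ℕ :=
  (Multiset.sort l (· ≤ ·)).getD (Multiset.card l / 2) 0

/-- The set containing, for each round-`R` unique famous witness `y` of `H`, the
earliest self-ancestor of `y` having `x` as an ancestor. -/
def tsContributors (creator : E → ℕ) (n c : ℕ) (H : Hashgraph E) (x : E) (R : ℕ) : Finset E :=
  H.events.filter (fun z => ∃ y ∈ H.events, UniqueFamous creator n c H y ∧ H.round y = R ∧
    H.SelfAncestor z y ∧ H.Ancestor x z ∧ ∀ z', H.selfParent z = some z' → ¬ H.Ancestor x z')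

/-- The logical timestamp of `x`, given its roundReceived `R`. -/
def logicalTimestamp (creator ts : E → ℕ) (n c : ℕ) (H : Hashgraph E) (x : E) (R : ℕ) : ℕ :=
  medianOf ((tsContributors creator n c H x R).val.map ts)

/-- The whitened signature of `x`, given its roundReceived `R`: the XOR of `x`'s
signature with the signatures of all round-`R` unique famous witnesses. -/
def whitenedSig (creator sig : E → ℕ) (n c : ℕ) (H : Hashgraph E) (x : E) (R : ℕ) : ℕ :=
  (Multiset.sort
    ((H.events.filter (fun y => UniqueFamous creator n c H y ∧ H.round y = R)).val.map sig) (· ≤ ·)).foldr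
    Nat.xor (sig x)

/-- The roundReceived of `x` in `H`, as a value. -/
def rrVal (creator : E → ℕ) (n c : ℕ) (H : Hashgraph E) (x : E) : ℕ :=
  sInf {R | RoundReceived creator n c H x R}

/-- The sort key of an event: roundReceived, then logical timestamp, then whitened
signature. -/
def key (creator sig ts : E → ℕ) (n c : ℕ) (H : Hashgraph E) (x : E) : ℕ × ℕ × ℕ :=
  (rrVal creator n c H x,
   logicalTimestamp creator ts n c H x (rrVal creator n c H x),
   whitenedSig creator sig n c H x (rrVal creator n c H x))

/-- Lexicographic comparison of sort keys. -/
def keyLE (a b : ℕ × ℕ × ℕ) : Prop :=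
  a.1 < b.1 ∨ (a.1 = b.1 ∧ (a.2.1 < b.2.1 ∨ (a.2.1 = b.2.1 ∧ a.2.2 ≤ b.2.2)))

/-- `L` is the log of `H`: the list of all events of `H` that have a roundReceived,
sorted lexicographically by roundReceived, then logical timestamp, then whitened
signature. -/
def IsLog (creator sig ts : E → ℕ) (n c : ℕ) (H : Hashgraph E) (L : List E) : Prop :=
  (↑L : Multiset E) = (H.events.filter (fun x => ∃ R, RoundReceived creator n c H x R)).val ∧
  L.Pairwise (fun a b => keyLE (key creator sig ts n c H a) (key creator sig ts n c H b))

/-- No two events of `H` created by the same honest (non-corrupted) party form a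
fork in `H`. -/
def HonestForkFree1 (creator : E → ℕ) (corrupted : Finset ℕ) (H : Hashgraph E) : Prop :=
  ∀ x ∈ H.events, ∀ y ∈ H.events, creator x = creator y → creator x ∉ corrupted →
    (H.Ancestor x y ∨ H.Ancestor y x)

/-- No two events created by the same honest party, in any of the hashgraphs `A`, `B`,
form a fork. -/
def HonestForkFree2 [DecidableEq E] (creator : E → ℕ) (corrupted : Finset ℕ)
    (A B : Hashgraph E) : Prop :=
  ∀ x ∈ A.events ∪ B.events, ∀ y ∈ A.events ∪ B.events,
    creator x = creator y → creator x ∉ corrupted →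
    ((x ∈ A.events ∧ y ∈ A.events ∧ (A.Ancestor x y ∨ A.Ancestor y x)) ∨
     (x ∈ B.events ∧ y ∈ B.events ∧ (B.Ancestor x y ∨ B.Ancestor y x)))

/-- `H` is fork-free: no two of its events form a fork. -/
def ForkFree (creator : E → ℕ) (H : Hashgraph E) : Prop :=
  ∀ x ∈ H.events, ∀ y ∈ H.events, creator x = creator y →
    (H.Ancestor x y ∨ H.Ancestor y x)

/-- `H'` extends `H`: every event of `H` is an event of `H'` with the same parent
pointers (and hence the same round and votes). -/
def Extends (H' H : Hashgraph E) : Prop :=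
  H.events ⊆ H'.events ∧ ∀ x ∈ H.events,
    H'.selfParent x = H.selfParent x ∧ H'.otherParent x = H.otherParent x ∧
    H'.round x = H.round x ∧ ∀ y ∈ H.events, H'.vote x y = H.vote x y

/-- `w` strongly sees more than `2n/3` round-`r` witnesses with distinct creators,
all of which vote `v` in `x`'s famousness election (i.e. `w` does not determine its
round vote by coin flip). -/
def SeesQuorumVoting (creator : E → ℕ) (n : ℕ) (H : Hashgraph E) (w x : E) (r : ℕ)
    (v : Bool) : Prop :=
  ∃ S : Finset E, (↑S : Set E) ⊆ (↑H.events : Set E) ∧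
    (∀ u ∈ S, H.Witness u ∧ H.round u = r ∧ StronglySees creator n H w u ∧ H.vote u x = v) ∧
    Set.InjOn creator ↑S ∧ 2 * n < 3 * S.card

end Hashgraph

open Hashgraph

/-! Two strong-seeing quorums each cover more than `2n/3` of the `n` parties, so they share an
honest party `p`. Its events `a` (seeing `x` in `A`) and `b` (seeing `y` in `B`) are comparable,
as `p` does not fork; transporting ancestry between `A` and `B` by graph consistency, the later
of the two has both `x` and `y` as ancestors, so it observes the fork although it sees one side. -/

theorem Finset.exists_mem_inter_notMem_of_quorums {α : Type*} [DecidableEq α]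
    {P Q C : Finset α} {n t : ℕ} (hPQ : (P ∪ Q).card ≤ n)
    (hP : 2 * n < 3 * P.card) (hQ : 2 * n < 3 * Q.card)
    (hC : C.card ≤ t) (ht : 3 * t < n) : ∃ p ∈ P ∩ Q, p ∉ C := by
  by_contra! hPQC
  have hinter : (P ∩ Q).card ≤ C.card := Finset.card_le_card hPQC
  have hunion := Finset.card_union_add_card_inter P Q
  omega

namespace Hashgraph

variable {E : Type} {creator : E → ℕ} {A B H : Hashgraph E}

theorem Fork.symm {x y : E} (h : Fork creator H x y) : Fork creator H y x :=
  ⟨h.1.symm, h.2.2, h.2.1⟩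

theorem GraphConsistent.symm (h : GraphConsistent A B) : GraphConsistent B A := fun v hB hA =>
  ⟨(h v hA hB).1.symm, (h v hA hB).2.1.symm, fun u => ((h v hA hB).2.2 u).symm⟩

theorem Sees.not_ancestor_of_fork {u x y : E} (hu : Sees creator H u x)
    (hxy : Fork creator H x y) : ¬ H.Ancestor y u := fun hyu =>
  hu.2 ⟨x, y, hu.1, hyu, rfl, hxy.1.symm, hxy⟩

theorem StronglySees.exists_parties {n : ℕ} {w y : E}
    (hcreator : ∀ v ∈ H.events, 1 ≤ creator v ∧ creator v ≤ n)
    (h : StronglySees creator n H w y) :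
    ∃ P ⊆ Finset.Icc 1 n, 2 * n < 3 * P.card ∧
      ∀ p ∈ P, ∃ v ∈ H.events, creator v = p ∧ Sees creator H v y := by
  obtain ⟨S, hSH, hS, hinj, hcard⟩ := h
  refine ⟨S.image creator, ?_, by rwa [Finset.card_image_of_injOn hinj], ?_⟩
  · intro p hp
    obtain ⟨v, hv, rfl⟩ := Finset.mem_image.1 hp
    exact Finset.mem_Icc.2 (hcreator v (hSH hv))
  · intro p hp
    obtain ⟨v, hv, rfl⟩ := Finset.mem_image.1 hp
    exact ⟨v, hSH hv, rfl, (hS v hv).2⟩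

theorem GraphConsistent.not_comparable_of_sees_fork (hcons : GraphConsistent A B)
    {x y a b : E} (hxyA : Fork creator A x y) (hxyB : Fork creator B x y)
    (ha : Sees creator A a x) (hb : Sees creator B b y)
    (hbA : b ∈ A.events) (hbB : b ∈ B.events) :
    ¬ (A.Ancestor a b ∨ A.Ancestor b a) := by
  have hancestor : ∀ u, A.Ancestor u b ↔ B.Ancestor u b := (hcons b hbA hbB).2.2
  rintro (hab | hba)
  · exact hb.not_ancestor_of_fork hxyB.symm ((hancestor x).1 (hab.trans ha.1))
  · exact ha.not_ancestor_of_fork hxyA (hba.trans ((hancestor y).2 hb.1))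

end Hashgraph

theorem stmt0_general {E : Type} [DecidableEq E] (creator sig ts : E → ℕ) (n c t : ℕ)
    (A B : Hashgraph E)
    (hA : A.Valid creator sig ts n c) (hB : B.Valid creator sig ts n c)
    (hcons : GraphConsistent A B)
    (corrupted : Finset ℕ) (hcard : corrupted.card ≤ t) (ht : 3 * t < n)
    (hhonest : HonestForkFree2 creator corrupted A B)
    (x y z : E)
    (hfork : creator x = creator y ∧ ¬ A.Ancestor x y ∧ ¬ A.Ancestor y x ∧
      ¬ B.Ancestor x y ∧ ¬ B.Ancestor y x)
    (hss : StronglySees creator n A z x) :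
    ∀ w ∈ B.events, ¬ StronglySees creator n B w y := by
  intro w _ hssB
  obtain ⟨PA, hPA, hPAcard, hPAsees⟩ := hss.exists_parties hA.creator_mem
  obtain ⟨PB, hPB, hPBcard, hPBsees⟩ := hssB.exists_parties hB.creator_mem
  have hPAB : (PA ∪ PB).card ≤ n := by
    simpa using Finset.card_le_card (Finset.union_subset hPA hPB)
  obtain ⟨p, hp, hpC⟩ :=
    Finset.exists_mem_inter_notMem_of_quorums hPAB hPAcard hPBcard hcard ht
  obtain ⟨a, haA, rfl, hax⟩ := hPAsees _ (Finset.mem_inter.1 hp).1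
  obtain ⟨b, hbB, hba, hby⟩ := hPBsees _ (Finset.mem_inter.1 hp).2
  obtain ⟨hxy, hxyA, hyxA, hxyB, hyxB⟩ := hfork
  have hforkA : Fork creator A x y := ⟨hxy, hxyA, hyxA⟩
  have hforkB : Fork creator B x y := ⟨hxy, hxyB, hyxB⟩
  rcases hhonest a (Finset.mem_union_left _ haA) b (Finset.mem_union_right _ hbB) hba.symm hpC
    with ⟨-, hbA, hab⟩ | ⟨haB, -, hab⟩
  · exact hcons.not_comparable_of_sees_fork hforkA hforkB hax hby hbA hbB hab
  · exact hcons.symm.not_comparable_of_sees_fork hforkB.symm hforkA.symm hby hax haB haA hab.symm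

/-- Strongly Seeing Lemma (Lemma 5.12): for graph-consistent hashgraphs `A`, `B`
with at most `t` corrupted parties, `3t < n`, and no honest forks, if `(x, y)` is a
fork and some event `z` of `A` strongly sees `x` in `A`, then no event of `B`
strongly sees `y` in `B`. -/
theorem stmt0 {E : Type} [DecidableEq E] (creator sig ts : E → ℕ) (n c t : ℕ)
    (A B : Hashgraph E)
    (hA : A.Valid creator sig ts n c) (hB : B.Valid creator sig ts n c)
    (hcons : GraphConsistent A B)
    (corrupted : Finset ℕ) (hcard : corrupted.card ≤ t) (ht : 3 * t < n)
    (hhonest : HonestForkFree2 creator corrupted A B)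
    (x y z : E)
    (hfork : creator x = creator y ∧ ¬ A.Ancestor x y ∧ ¬ A.Ancestor y x ∧
      ¬ B.Ancestor x y ∧ ¬ B.Ancestor y x)
    (hz : z ∈ A.events) (hss : StronglySees creator n A z x) :
    ∀ w ∈ B.events, ¬ StronglySees creator n B w y :=
  stmt0_general creator sig ts n c t A B hA hB hcons corrupted hcard ht hhonest x y z hfork hss
end
end

section
/- Let A and B be graph-consistent hashgraphs on n parties, and let x and y be events contained in both A and B. If x sees y in A, then x sees y in B. -/
open Classical

attribute [local instance] Classical.propDecidable

noncomputable section

open Hashgraph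

/-! Observing a fork only involves ancestors of `x` and the ancestry relation among them;
both are events of `A` and of `B`, where graph consistency makes that relation the same. -/

namespace Hashgraph

variable {E : Type} {creator sig ts : E → ℕ} {n c : ℕ}

theorem Valid.mem_of_ancestor {H : Hashgraph E} (hV : H.Valid creator sig ts n c) {x y : E}
    (hx : x ∈ H.events) (h : H.Ancestor y x) : y ∈ H.events := by
  induction h with
  | refl => exact hx
  | tail _ hp ih =>
    rcases hp with hp | hp
    · exact hV.selfParent_mem _ ih _ hp
    · exact hV.otherParent_mem _ ih _ hp

theorem GraphConsistent.fork_iff {A B : Hashgraph E} (hcons : GraphConsistent A B) {z z' : E}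
    (hzA : z ∈ A.events) (hzB : z ∈ B.events) (hz'A : z' ∈ A.events) (hz'B : z' ∈ B.events) :
    Fork creator A z z' ↔ Fork creator B z z' := by
  simp only [Fork, (hcons z' hz'A hz'B).2.2 z, (hcons z hzA hzB).2.2 z']

theorem GraphConsistent.observesForkFrom_left_of_right {A B : Hashgraph E}
    (hA : A.Valid creator sig ts n c) (hB : B.Valid creator sig ts n c)
    (hcons : GraphConsistent A B) {x : E} (hxA : x ∈ A.events) (hxB : x ∈ B.events) {p : ℕ}
    (h : ObservesForkFrom creator B x p) : ObservesForkFrom creator A x p := by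
  obtain ⟨z, z', hzB, hz'B, hcz, hcz', hfork⟩ := h
  have hzA := ((hcons x hxA hxB).2.2 z).mpr hzB
  have hz'A := ((hcons x hxA hxB).2.2 z').mpr hz'B
  exact ⟨z, z', hzA, hz'A, hcz, hcz', (hcons.fork_iff (hA.mem_of_ancestor hxA hzA)
    (hB.mem_of_ancestor hxB hzB) (hA.mem_of_ancestor hxA hz'A)
    (hB.mem_of_ancestor hxB hz'B)).mpr hfork⟩

end Hashgraph

theorem stmt2_general {E : Type} (creator sig ts : E → ℕ) (n c : ℕ)
    (A B : Hashgraph E)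
    (hA : A.Valid creator sig ts n c) (hB : B.Valid creator sig ts n c)
    (hcons : GraphConsistent A B)
    (x y : E) (hxA : x ∈ A.events) (hxB : x ∈ B.events)
    (h : Sees creator A x y) : Sees creator B x y :=
  ⟨((hcons x hxA hxB).2.2 y).mp h.1,
    fun hfork => h.2 (hcons.observesForkFrom_left_of_right hA hB hxA hxB hfork)⟩

/-- Seeing is consistent: for graph-consistent hashgraphs `A` and `B` and events
`x`, `y` contained in both, if `x` sees `y` in `A` then `x` sees `y` in `B`. -/
theorem stmt2 {E : Type} (creator sig ts : E → ℕ) (n c : ℕ)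
    (A B : Hashgraph E)
    (hA : A.Valid creator sig ts n c) (hB : B.Valid creator sig ts n c)
    (hcons : GraphConsistent A B)
    (x y : E) (hxA : x ∈ A.events) (hxB : x ∈ B.events)
    (hyA : y ∈ A.events) (hyB : y ∈ B.events)
    (h : Sees creator A x y) : Sees creator B x y :=
  stmt2_general creator sig ts n c A B hA hB hcons x y hxA hxB h
end
end

section
/- Let n ≥ 7 and let H be a fork-free hashgraph on n parties such that: every event of H has round at most r; each party has exactly one round-r witness in H; each party's round-r witness has no proper descendant in H created by the same party; no round-r witness is an ancestor of another round-r witness; and x is the round-r witness of party 1. Then there exists a fork-free hashgraph H′ extending H in which each party has exactly one round-(r+1) witness, no round-(r+1) witness is an ancestor of another round-(r+1) witness, exactly ⌊n/2⌋ of the round-(r+1) witnesses have x as an ancestor (and hence vote yes in x's famousness election), and the remaining n−⌊n/2⌋ round-(r+1) witnesses do not have x as an ancestor (and hence vote no). -/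
open Classical

attribute [local instance] Classical.propDecidable

noncomputable section

open Hashgraph

/-!
Each party extends its round-`r` witness by a chain of new events. Fix a core of
`quorum n = ⌊2n/3⌋ + 1` parties not containing party `1`. A chain first gossips with the
round-`r` witnesses of `quorum n - 1` core parties, so that the last gossip event of a core party
lies above all core witnesses; a party of `yesParties \ {1}` (where `yesParties` has `⌊n/2⌋`
members, among them `1`) then takes `x` as other-parent; finally the chain collects the last
gossip events of `quorum n - 1` core parties. Through these, the last event of each chain strongly
sees every core witness and is promoted to round `r + 1`. An earlier event has collected at most
`quorum n - 2` gossip events, and apart from them only its own chain and the witness itself lie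
between it and a round-`r` witness, so it strongly sees too few witnesses to be promoted.
Since `x` lies below no other round-`r` witness, it lies below the top of party `p` exactly when
`p ∈ yesParties`, and the new round-`(r + 1)` witnesses vote on `x` by ancestry. Old events keep
their rounds and votes because no new event is an ancestor of an old one.
-/

namespace Hashgraph

variable {E : Type} {creator sig ts : E → ℕ} {n c : ℕ} {H H' : Hashgraph E} {x y w e : E}

theorem Valid.ancestor_mem (hH : H.Valid creator sig ts n c) (hx : x ∈ H.events)
    (h : H.Ancestor y x) : y ∈ H.events := by
  induction h with
  | refl => exact hx
  | tail _ hp ih =>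
    rcases hp with hp | hp
    · exact hH.selfParent_mem _ ih _ hp
    · exact hH.otherParent_mem _ ih _ hp

theorem StronglySees.ancestor (h : StronglySees creator n H x y) : H.Ancestor y x := by
  obtain ⟨s, -, hs, -, hcard⟩ := h
  obtain ⟨z, hz⟩ : s.Nonempty := Finset.card_pos.1 (by omega)
  exact (hs z hz).1.1.trans (hs z hz).2.1

theorem ForkFree.sees_iff (hff : ForkFree creator H)
    (hx : ∀ z, H.Ancestor z x → z ∈ H.events) : Sees creator H x y ↔ H.Ancestor y x := by
  refine ⟨And.left, fun h => ⟨h, ?_⟩⟩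
  rintro ⟨z, z', hz, hz', hzc, hz'c, -, hzz', hz'z⟩
  rcases hff z (hx z hz) z' (hx z' hz') (hzc.trans hz'c.symm) with h | h
  exacts [hzz' h, hz'z h]

/-- The clauses of `Valid` that concern the single event `e`; in the voting clauses `e` is
the voter. -/
structure ValidAt (creator sig : E → ℕ) (n c : ℕ) (H : Hashgraph E) (e : E) : Prop where
  creator_mem : 1 ≤ creator e ∧ creator e ≤ n
  selfParent_mem : ∀ y, H.selfParent e = some y → y ∈ H.events
  otherParent_mem : ∀ y, H.otherParent e = some y → y ∈ H.events
  selfParent_creator : ∀ y, H.selfParent e = some y → creator y = creator e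
  otherParent_creator : ∀ y, H.otherParent e = some y → creator y ≠ creator e
  round_genesis : H.selfParent e = none → H.otherParent e = none → H.round e = 1
  round_spec : (H.selfParent e ≠ none ∨ H.otherParent e ≠ none) →
    H.round e = if PromotedAt creator n H e (H.maxParentRound e)
      then H.maxParentRound e + 1 else H.maxParentRound e
  vote_first : H.Witness e → ∀ x ∈ H.events, H.Witness x →
    H.round e = H.round x + 1 → H.vote e x = decide (Sees creator H e x)
  vote_later : H.Witness e → ∀ x ∈ H.events, H.Witness x →
    H.round x + 1 < H.round e →
    H.vote e x =
      if ¬ (c ∣ (H.round e - H.round x)) then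
        majorityVote H x (ssWitnesses creator n H e (H.round e - 1))
      else if 2 * n < 3 * ((ssWitnesses creator n H e (H.round e - 1)).filter
          (fun w => H.vote w x =
            majorityVote H x (ssWitnesses creator n H e (H.round e - 1)))).card then
        majorityVote H x (ssWitnesses creator n H e (H.round e - 1))
      else middleBit (sig e)

theorem Valid.of_validAt (h : ∀ e ∈ H.events, ValidAt creator sig n c H e)
    (hacyc : ∀ x ∈ H.events, ∀ y ∈ H.events, H.Ancestor x y → H.Ancestor y x → x = y) :
    H.Valid creator sig ts n c where
  creator_mem e he := (h e he).creator_mem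
  selfParent_mem e he := (h e he).selfParent_mem
  otherParent_mem e he := (h e he).otherParent_mem
  selfParent_creator e he := (h e he).selfParent_creator
  otherParent_creator e he := (h e he).otherParent_creator
  acyclic := hacyc
  round_genesis e he := (h e he).round_genesis
  round_spec e he := (h e he).round_spec
  vote_first x hx hwx y hy hwy := (h y hy).vote_first hwy x hx hwx
  vote_later x hx hwx y hy hwy := (h y hy).vote_later hwy x hx hwx

/-! ### Extensions do not change the past -/

namespace Extends

theorem round_eq (hext : Extends H' H) (hx : x ∈ H.events) : H'.round x = H.round x :=
  (hext.2 x hx).2.2.1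

theorem vote_eq (hext : Extends H' H) (hy : y ∈ H.events) (hx : x ∈ H.events) :
    H'.vote y x = H.vote y x :=
  (hext.2 y hy).2.2.2 x hx

theorem parent_iff (hext : Extends H' H) (hx : x ∈ H.events) :
    H'.Parent x y ↔ H.Parent x y := by
  obtain ⟨hsp, hop, -⟩ := hext.2 x hx
  rw [Parent, Parent, hsp, hop]

theorem ancestor_iff (hext : Extends H' H) (hH : H.Valid creator sig ts n c)
    (hx : x ∈ H.events) : H'.Ancestor y x ↔ H.Ancestor y x := by
  constructor <;> intro h
  · induction h with
    | refl => exact .refl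
    | tail _ hp ih => exact ih.tail ((hext.parent_iff (hH.ancestor_mem hx ih)).1 hp)
  · induction h with
    | refl => exact .refl
    | tail hb hp ih => exact ih.tail ((hext.parent_iff (hH.ancestor_mem hx hb)).2 hp)

theorem ancestor_mem (hext : Extends H' H) (hH : H.Valid creator sig ts n c)
    (hx : x ∈ H.events) (h : H'.Ancestor y x) : y ∈ H.events :=
  hH.ancestor_mem hx ((hext.ancestor_iff hH hx).1 h)

theorem sees_iff (hext : Extends H' H) (hH : H.Valid creator sig ts n c)
    (hx : x ∈ H.events) : Sees creator H' x y ↔ Sees creator H x y := by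
  have hfork : ∀ z z', z ∈ H.events → z' ∈ H.events →
      (Fork creator H' z z' ↔ Fork creator H z z') := fun z z' hz hz' => by
    rw [Fork, Fork, hext.ancestor_iff hH hz, hext.ancestor_iff hH hz']
  have hobs : ObservesForkFrom creator H' x (creator y) ↔
      ObservesForkFrom creator H x (creator y) := by
    refine exists_congr fun z => exists_congr fun z' => ?_
    rw [hext.ancestor_iff hH hx, hext.ancestor_iff hH hx]
    refine and_congr_right fun hz => and_congr_right fun hz' => ?_
    rw [hfork z z' (hH.ancestor_mem hx hz) (hH.ancestor_mem hx hz')]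
  rw [Sees, Sees, hext.ancestor_iff hH hx, hobs]

theorem stronglySees_iff (hext : Extends H' H) (hH : H.Valid creator sig ts n c)
    (hx : x ∈ H.events) : StronglySees creator n H' x y ↔ StronglySees creator n H x y := by
  constructor
  · rintro ⟨s, -, hs, hinj, hcard⟩
    have hsH : ∀ z ∈ s, z ∈ H.events := fun z hz => hext.ancestor_mem hH hx (hs z hz).1.1
    refine ⟨s, fun z hz => hsH z hz, fun z hz => ?_, hinj, hcard⟩
    rw [← hext.sees_iff hH hx, ← hext.sees_iff hH (hsH z hz)]
    exact hs z hz
  · rintro ⟨s, hsub, hs, hinj, hcard⟩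
    refine ⟨s, fun z hz => hext.1 (hsub hz), fun z hz => ?_, hinj, hcard⟩
    rw [hext.sees_iff hH hx, hext.sees_iff hH (hsub hz)]
    exact hs z hz

theorem witness_iff (hext : Extends H' H) (hH : H.Valid creator sig ts n c)
    (hx : x ∈ H.events) : H'.Witness x ↔ H.Witness x := by
  simp only [Witness, (hext.2 x hx).1, hext.round_eq hx, hx, hext.1 hx, true_and]
  refine forall_congr' fun y => imp_congr_right fun hy => ?_
  rw [hext.round_eq (hH.selfParent_mem x hx y hy)]

theorem stronglySeenWitness_iff (hext : Extends H' H) (hH : H.Valid creator sig ts n c)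
    (hx : x ∈ H.events) {ρ : ℕ} :
    (H'.Witness w ∧ H'.round w = ρ ∧ StronglySees creator n H' x w) ↔
      (H.Witness w ∧ H.round w = ρ ∧ StronglySees creator n H x w) := by
  by_cases hw : w ∈ H.events
  · rw [hext.witness_iff hH hw, hext.round_eq hw, hext.stronglySees_iff hH hx]
  · exact iff_of_false (fun h => hw (hext.ancestor_mem hH hx h.2.2.ancestor))
      (fun h => hw h.1.1)

theorem promotedAt_iff (hext : Extends H' H) (hH : H.Valid creator sig ts n c)
    (hx : x ∈ H.events) {ρ : ℕ} :
    PromotedAt creator n H' x ρ ↔ PromotedAt creator n H x ρ := by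
  refine exists_congr fun s => ⟨?_, ?_⟩ <;> rintro ⟨-, hs, hinj, hcard⟩
  · have hs' := fun w hw => (hext.stronglySeenWitness_iff hH hx).1 (hs w hw)
    exact ⟨fun w hw => (hs' w hw).1.1, hs', hinj, hcard⟩
  · have hs' := fun w hw => (hext.stronglySeenWitness_iff hH hx).2 (hs w hw)
    exact ⟨fun w hw => (hs' w hw).1.1, hs', hinj, hcard⟩

theorem ssWitnesses_eq (hext : Extends H' H) (hH : H.Valid creator sig ts n c)
    (hx : x ∈ H.events) (ρ : ℕ) :
    ssWitnesses creator n H' x ρ = ssWitnesses creator n H x ρ := by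
  ext w
  simp only [ssWitnesses, Finset.mem_filter]
  rw [hext.stronglySeenWitness_iff hH hx]
  exact ⟨fun h => ⟨h.2.1.1, h.2⟩, fun h => ⟨hext.1 h.1, h.2⟩⟩

theorem maxParentRound_eq (hext : Extends H' H) (hH : H.Valid creator sig ts n c)
    (hx : x ∈ H.events) : H'.maxParentRound x = H.maxParentRound x := by
  obtain ⟨hsp, hop, -⟩ := hext.2 x hx
  unfold maxParentRound
  rw [hsp, hop]
  congr 1
  · cases h : H.selfParent x with
    | none => rfl
    | some y => exact hext.round_eq (hH.selfParent_mem x hx y h)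
  · cases h : H.otherParent x with
    | none => rfl
    | some y => exact hext.round_eq (hH.otherParent_mem x hx y h)

theorem majorityVote_eq (hext : Extends H' H) (hx : x ∈ H.events) {s : Finset E}
    (hs : ∀ w ∈ s, w ∈ H.events) : majorityVote H' x s = majorityVote H x s := by
  unfold majorityVote
  rw [Finset.filter_congr fun w hw => by rw [hext.vote_eq (hs w hw) hx]]

/-- `hlate` rules out new candidates in the elections of old voters. -/
theorem validAt (hext : Extends H' H) (hH : H.Valid creator sig ts n c)
    (hlate : ∀ x ∈ H'.events, x ∉ H.events → H'.Witness x →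
      ∀ y ∈ H.events, H.round y ≤ H'.round x)
    (he : e ∈ H.events) : ValidAt creator sig n c H' e := by
  obtain ⟨hsp, hop, -⟩ := hext.2 e he
  have hcandidate : ∀ x ∈ H'.events, H'.Witness x → H'.round x < H'.round e →
      x ∈ H.events :=
    fun x hx hwx hr => by_contra fun hxH => by
      have := hlate x hx hxH hwx e he
      rw [hext.round_eq he] at hr
      omega
  refine ⟨hH.creator_mem e he, fun y hy => hext.1 (hH.selfParent_mem e he y (hsp ▸ hy)),
    fun y hy => hext.1 (hH.otherParent_mem e he y (hop ▸ hy)),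
    fun y hy => hH.selfParent_creator e he y (hsp ▸ hy),
    fun y hy => hH.otherParent_creator e he y (hop ▸ hy), fun h1 h2 => ?_, fun h => ?_,
    fun hwe x hx hwx hr => ?_, fun hwe x hx hwx hr => ?_⟩
  · rw [hext.round_eq he]
    exact hH.round_genesis e he (hsp ▸ h1) (hop ▸ h2)
  · rw [hext.round_eq he, hext.maxParentRound_eq hH he, hext.promotedAt_iff hH he]
    exact hH.round_spec e he (hsp ▸ hop ▸ h)
  · have hxH := hcandidate x hx hwx (by omega)
    rw [hext.round_eq he, hext.round_eq hxH] at hr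
    rw [hext.vote_eq he hxH, hext.sees_iff hH he,
      hH.vote_first x hxH ((hext.witness_iff hH hxH).1 hwx) e he
        ((hext.witness_iff hH he).1 hwe) hr]
  · have hxH := hcandidate x hx hwx (by omega)
    rw [hext.round_eq he, hext.round_eq hxH] at hr ⊢
    have hsub : ∀ w ∈ ssWitnesses creator n H e (H.round e - 1), w ∈ H.events :=
      fun w hw => (Finset.mem_filter.1 hw).1
    rw [hext.vote_eq he hxH, hext.ssWitnesses_eq hH he, hext.majorityVote_eq hxH hsub,
      Finset.filter_congr fun w hw => by rw [hext.vote_eq (hsub w hw) hxH]]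
    exact hH.vote_later x hxH ((hext.witness_iff hH hxH).1 hwx) e he
      ((hext.witness_iff hH he).1 hwe) hr

theorem valid (hext : Extends H' H) (hH : H.Valid creator sig ts n c)
    (hlate : ∀ x ∈ H'.events, x ∉ H.events → H'.Witness x →
      ∀ y ∈ H.events, H.round y ≤ H'.round x)
    (hnew : ∀ e ∈ H'.events, e ∉ H.events → ValidAt creator sig n c H' e)
    (hacyc : ∀ x ∈ H'.events, x ∉ H.events → ∀ y ∈ H'.events, y ∉ H.events →
      H'.Ancestor x y → H'.Ancestor y x → x = y) :
    H'.Valid creator sig ts n c := by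
  refine Valid.of_validAt (fun e he => ?_) (fun x hx y hy hxy hyx => ?_)
  · by_cases heH : e ∈ H.events
    · exact hext.validAt hH hlate heH
    · exact hnew e he heH
  · by_cases hyH : y ∈ H.events
    · have hxH := hext.ancestor_mem hH hyH hxy
      exact hH.acyclic x hxH y hyH ((hext.ancestor_iff hH hyH).1 hxy)
        ((hext.ancestor_iff hH hxH).1 hyx)
    · by_cases hxH : x ∈ H.events
      · exact absurd (hext.ancestor_mem hH hxH hyx) hyH
      · exact hacyc x hx hxH y hy hyH hxy hyx

end Extends

end Hashgraph

namespace DelayAttack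

/-- The least `k` with `2n < 3k`. -/
def quorum (n : ℕ) : ℕ := 2 * n / 3 + 1

theorem two_mul_lt_three_mul_quorum (n : ℕ) : 2 * n < 3 * quorum n := by
  unfold quorum; omega

theorem quorum_le_of_two_mul_lt {n k : ℕ} (h : 2 * n < 3 * k) : quorum n ≤ k := by
  unfold quorum; omega

theorem five_le_quorum {n : ℕ} (hn : 7 ≤ n) : 5 ≤ quorum n := by
  unfold quorum; omega

theorem quorum_lt {n : ℕ} (hn : 7 ≤ n) : quorum n < n := by
  unfold quorum; omega

/-- For `2 ≤ p`, `peer p i` is the `i`-th element of `{2, 3, …} \ {p}`. -/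
def peer (p i : ℕ) : ℕ := if i + 2 < p then i + 2 else i + 3

theorem peer_ne (p i : ℕ) : peer p i ≠ p := by
  unfold peer; split <;> omega

theorem peer_bounds (p i : ℕ) : 2 ≤ peer p i ∧ peer p i ≤ i + 3 := by
  unfold peer; split <;> omega

theorem peer_injective (p : ℕ) : Function.Injective (peer p) := by
  intro i j h
  unfold peer at h; split at h <;> split at h <;> omega

theorem exists_peer_eq {p q : ℕ} (hp : 2 ≤ p) (hq : 2 ≤ q) (hqp : q ≠ p) :
    ∃ i, i + 3 ≤ max p q ∧ peer p i = q := by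
  rcases lt_or_gt_of_ne hqp with h | h
  · exact ⟨q - 2, by omega, by unfold peer; split <;> omega⟩
  · exact ⟨q - 3, by omega, by unfold peer; split <;> omega⟩

structure Setup (E : Type) where
  creator : E → ℕ
  sig : E → ℕ
  ts : E → ℕ
  n : ℕ
  c : ℕ
  r : ℕ
  H : Hashgraph E
  x : E
  fresh : ℕ → ℕ → E
  seven_le : 7 ≤ n
  valid : H.Valid creator sig ts n c
  forkFree : ForkFree creator H
  round_le : ∀ e ∈ H.events, H.round e ≤ r
  existsUnique_witness : ∀ p, 1 ≤ p → p ≤ n →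
    ∃! w, w ∈ H.events ∧ H.Witness w ∧ H.round w = r ∧ creator w = p
  eq_of_witness_ancestor : ∀ w ∈ H.events, H.Witness w → H.round w = r →
    ∀ e ∈ H.events, creator e = creator w → H.Ancestor w e → e = w
  witness_antichain : ∀ w ∈ H.events, H.Witness w → H.round w = r →
    ∀ w' ∈ H.events, H.Witness w' → H.round w' = r → H.Ancestor w w' → w = w'
  x_mem : x ∈ H.events
  x_witness : H.Witness x
  x_round : H.round x = r
  x_creator : creator x = 1
  fresh_creator : ∀ p, 1 ≤ p → p ≤ n → ∀ i, creator (fresh p i) = p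
  fresh_not_mem : ∀ p, 1 ≤ p → p ≤ n → ∀ i, fresh p i ∉ H.events
  fresh_injective : ∀ p, 1 ≤ p → p ≤ n → Function.Injective (fresh p)

namespace Setup

variable {E : Type} (S : Setup E)

def IsWitnessOf (p : ℕ) (w : E) : Prop :=
  w ∈ S.H.events ∧ S.H.Witness w ∧ S.H.round w = S.r ∧ S.creator w = p

def wit (p : ℕ) : E := if h : ∃ w, S.IsWitnessOf p w then h.choose else S.x

theorem wit_spec {p : ℕ} (hp1 : 1 ≤ p) (hpn : p ≤ S.n) : S.IsWitnessOf p (S.wit p) := by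
  have h : ∃ w, S.IsWitnessOf p w := (S.existsUnique_witness p hp1 hpn).exists
  rw [wit, dif_pos h]
  exact h.choose_spec

theorem eq_wit {p : ℕ} {w : E} (hw : S.IsWitnessOf p w) : w = S.wit p := by
  have hp : 1 ≤ p ∧ p ≤ S.n := hw.2.2.2 ▸ S.valid.creator_mem w hw.1
  exact (S.existsUnique_witness p hp.1 hp.2).unique hw (S.wit_spec hp.1 hp.2)

theorem wit_one : S.wit 1 = S.x :=
  (S.eq_wit ⟨S.x_mem, S.x_witness, S.x_round, S.x_creator⟩).symm

theorem creator_wit {p : ℕ} (hp1 : 1 ≤ p) (hpn : p ≤ S.n) : S.creator (S.wit p) = p :=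
  (S.wit_spec hp1 hpn).2.2.2

theorem eq_wit_of_ancestor {u : ℕ} {w : E} (hu1 : 1 ≤ u) (hun : u ≤ S.n)
    (hw : w ∈ S.H.events) (hww : S.H.Witness w) (hwr : S.H.round w = S.r)
    (h : S.H.Ancestor w (S.wit u)) : w = S.wit u :=
  have ⟨hm, hwit, hr, _⟩ := S.wit_spec hu1 hun
  S.witness_antichain w hw hww hwr _ hm hwit hr h

/-! ### The extension -/

/-- The `quorum S.n` parties whose round-`r` witnesses all new top events strongly see. -/
def core : Finset ℕ := Finset.Icc 2 (quorum S.n + 1)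

def yesParties : Finset ℕ := Finset.Icc 1 (S.n / 2)

def xPull (p : ℕ) : ℕ := if p ∈ S.yesParties ∧ p ≠ 1 then 1 else 0

def chainLen (p : ℕ) : ℕ := 2 * (quorum S.n - 1) + S.xPull p

def topIdx (p : ℕ) : ℕ := S.chainLen p - 1

/-- The new events of the extension are the `fresh p k` with `S.Slot p k`. -/
def Slot (p k : ℕ) : Prop := 1 ≤ p ∧ p ≤ S.n ∧ k < S.chainLen p

def newEvents : Finset E :=
  (Finset.Icc 1 S.n).biUnion fun p => (Finset.range (S.chainLen p)).image (S.fresh p)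

def index (e : E) : ℕ := Function.invFun (S.fresh (S.creator e)) e

def gossipEvent (q : ℕ) : E := S.fresh q (quorum S.n - 2)

def selfParentOf (p k : ℕ) : E := if k = 0 then S.wit p else S.fresh p (k - 1)

/-- The chain of party `p` first gossips with the witnesses of `quorum S.n - 1` core parties,
then, if `p ∈ yesParties \ {1}`, pulls in `x`, and finally collects the gossip events of
`quorum S.n - 1` core parties. -/
def otherParentOf (p k : ℕ) : E :=
  if k < quorum S.n - 1 then S.wit (peer p k)
  else if k < quorum S.n - 1 + S.xPull p then S.x
  else S.gossipEvent (peer p (k - (quorum S.n - 1) - S.xPull p))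

/-- The extension without its votes, which are defined from its ancestry. -/
def graph : Hashgraph E where
  events := S.H.events ∪ S.newEvents
  selfParent e :=
    if e ∈ S.newEvents then some (S.selfParentOf (S.creator e) (S.index e)) else S.H.selfParent e
  otherParent e :=
    if e ∈ S.newEvents then some (S.otherParentOf (S.creator e) (S.index e))
    else S.H.otherParent e
  round e :=
    if e ∈ S.newEvents then (if S.index e = S.topIdx (S.creator e) then S.r + 1 else S.r)
    else S.H.round e
  vote := S.H.vote

def coreWitnesses : Finset E := S.core.image S.wit

/-- The vote that `vote_later` prescribes to a new top event `a` (the round-`r` witnesses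
it strongly sees are the `coreWitnesses`). -/
def laterVote (a b : E) : Bool :=
  if ¬ (S.c ∣ (S.r + 1 - S.H.round b)) then majorityVote S.H b S.coreWitnesses
  else if 2 * S.n < 3 * (S.coreWitnesses.filter
      (fun w => S.H.vote w b = majorityVote S.H b S.coreWitnesses)).card then
    majorityVote S.H b S.coreWitnesses
  else middleBit (S.sig a)

def ext : Hashgraph E :=
  { S.graph with
    vote := fun a b =>
      if a ∈ S.newEvents then
        if S.graph.round b = S.r then decide (S.graph.Ancestor b a) else S.laterVote a b
      else S.H.vote a b }

theorem five_le_quorum : 5 ≤ quorum S.n := DelayAttack.five_le_quorum S.seven_le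

theorem quorum_lt : quorum S.n < S.n := DelayAttack.quorum_lt S.seven_le

theorem mem_core {q : ℕ} : q ∈ S.core ↔ 2 ≤ q ∧ q ≤ quorum S.n + 1 := Finset.mem_Icc

theorem core_card : S.core.card = quorum S.n := by
  rw [core, Nat.card_Icc]; omega

theorem party_of_mem_core {q : ℕ} (hq : q ∈ S.core) : 1 ≤ q ∧ q ≤ S.n := by
  have := S.quorum_lt; rw [mem_core] at hq; omega

theorem peer_mem_core (p : ℕ) {i : ℕ} (hi : i ≤ quorum S.n - 2) : peer p i ∈ S.core := by
  have := peer_bounds p i; have := S.five_le_quorum; rw [mem_core]; omega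

theorem one_mem_yesParties : 1 ∈ S.yesParties := by
  have := S.seven_le; rw [yesParties, Finset.mem_Icc]; omega

theorem yesParties_subset : S.yesParties ⊆ Finset.Icc 1 S.n :=
  Finset.Icc_subset_Icc le_rfl (Nat.div_le_self _ _)

theorem yesParties_card : S.yesParties.card = S.n / 2 := by
  rw [yesParties, Nat.card_Icc]; omega

theorem xPull_eq_one {p : ℕ} : S.xPull p = 1 ↔ p ∈ S.yesParties ∧ p ≠ 1 := by
  unfold xPull; split_ifs with h
  exacts [iff_of_true rfl h, iff_of_false (by simp) h]

theorem xPull_le (p : ℕ) : S.xPull p ≤ 1 := by unfold xPull; split <;> omega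

theorem topIdx_eq (p : ℕ) : S.topIdx p = 2 * (quorum S.n - 1) + S.xPull p - 1 := rfl

variable {S} in
theorem Slot.mono {p k j : ℕ} (h : S.Slot p k) (hj : j ≤ k) : S.Slot p j :=
  ⟨h.1, h.2.1, by have := h.2.2; omega⟩

variable {S} in
theorem Slot.le_topIdx {p k : ℕ} (h : S.Slot p k) : k ≤ S.topIdx p := by
  have := h.2.2; unfold topIdx; omega

theorem slot_topIdx {p : ℕ} (hp1 : 1 ≤ p) (hpn : p ≤ S.n) : S.Slot p (S.topIdx p) :=
  ⟨hp1, hpn, by have := S.five_le_quorum; unfold topIdx chainLen; omega⟩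

theorem slot_of_le {p k : ℕ} (hp1 : 1 ≤ p) (hpn : p ≤ S.n)
    (hk : k ≤ 2 * (quorum S.n - 1) - 1) : S.Slot p k :=
  ⟨hp1, hpn, by have := S.five_le_quorum; unfold chainLen; omega⟩

theorem slot_gossip {q j : ℕ} (hq : q ∈ S.core) (hj : j ≤ quorum S.n - 2) : S.Slot q j :=
  S.slot_of_le (S.party_of_mem_core hq).1 (S.party_of_mem_core hq).2
    (by have := S.five_le_quorum; omega)

theorem creator_fresh {p k : ℕ} (h : S.Slot p k) : S.creator (S.fresh p k) = p :=
  S.fresh_creator p h.1 h.2.1 k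

theorem fresh_not_mem_H {p k : ℕ} (h : S.Slot p k) : S.fresh p k ∉ S.H.events :=
  S.fresh_not_mem p h.1 h.2.1 k

theorem fresh_inj {p k p' k' : ℕ} (h : S.Slot p k) (h' : S.Slot p' k')
    (he : S.fresh p k = S.fresh p' k') : p = p' ∧ k = k' := by
  obtain rfl : p = p' := by rw [← S.creator_fresh h, he, S.creator_fresh h']
  exact ⟨rfl, S.fresh_injective p h.1 h.2.1 he⟩

theorem mem_newEvents {e : E} : e ∈ S.newEvents ↔ ∃ p k, S.Slot p k ∧ S.fresh p k = e := by
  simp only [newEvents, Finset.mem_biUnion, Finset.mem_Icc, Finset.mem_image, Finset.mem_range,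
    Slot]
  constructor
  · rintro ⟨p, ⟨h1, h2⟩, k, hk, he⟩; exact ⟨p, k, ⟨h1, h2, hk⟩, he⟩
  · rintro ⟨p, k, ⟨h1, h2, hk⟩, he⟩; exact ⟨p, ⟨h1, h2⟩, k, hk, he⟩

theorem fresh_mem_newEvents {p k : ℕ} (h : S.Slot p k) : S.fresh p k ∈ S.newEvents :=
  S.mem_newEvents.2 ⟨p, k, h, rfl⟩

theorem not_mem_newEvents {e : E} (h : e ∈ S.H.events) : e ∉ S.newEvents := by
  rw [S.mem_newEvents]; rintro ⟨p, k, hg, rfl⟩; exact S.fresh_not_mem_H hg h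

theorem index_fresh {p k : ℕ} (h : S.Slot p k) : S.index (S.fresh p k) = k := by
  rw [index, S.creator_fresh h]
  exact Function.leftInverse_invFun (S.fresh_injective p h.1 h.2.1) k

theorem mem_ext_events {e : E} :
    e ∈ S.ext.events ↔ e ∈ S.H.events ∨ ∃ p k, S.Slot p k ∧ S.fresh p k = e := by
  change e ∈ S.H.events ∪ S.newEvents ↔ _
  rw [Finset.mem_union, S.mem_newEvents]

theorem fresh_mem_ext {p k : ℕ} (h : S.Slot p k) : S.fresh p k ∈ S.ext.events :=
  S.mem_ext_events.2 (Or.inr ⟨p, k, h, rfl⟩)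

theorem wit_mem_ext {p : ℕ} (hp1 : 1 ≤ p) (hpn : p ≤ S.n) : S.wit p ∈ S.ext.events :=
  S.mem_ext_events.2 (Or.inl (S.wit_spec hp1 hpn).1)

theorem ext_selfParent_fresh {p k : ℕ} (h : S.Slot p k) :
    S.ext.selfParent (S.fresh p k) = some (S.selfParentOf p k) := by
  change ite _ _ _ = _
  rw [if_pos (S.fresh_mem_newEvents h), S.creator_fresh h, S.index_fresh h]

theorem ext_otherParent_fresh {p k : ℕ} (h : S.Slot p k) :
    S.ext.otherParent (S.fresh p k) = some (S.otherParentOf p k) := by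
  change ite _ _ _ = _
  rw [if_pos (S.fresh_mem_newEvents h), S.creator_fresh h, S.index_fresh h]

theorem ext_round_fresh {p k : ℕ} (h : S.Slot p k) :
    S.ext.round (S.fresh p k) = if k = S.topIdx p then S.r + 1 else S.r := by
  change ite _ _ _ = _
  rw [if_pos (S.fresh_mem_newEvents h), S.creator_fresh h, S.index_fresh h]

theorem ext_vote_fresh {p k : ℕ} (h : S.Slot p k) (b : E) :
    S.ext.vote (S.fresh p k) b = if S.ext.round b = S.r then
      decide (S.ext.Ancestor b (S.fresh p k)) else S.laterVote (S.fresh p k) b := by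
  change ite _ _ _ = _
  rw [if_pos (S.fresh_mem_newEvents h)]
  rfl

theorem extends_ext : Extends S.ext S.H := by
  refine ⟨Finset.subset_union_left, fun e he => ?_⟩
  have hnew := S.not_mem_newEvents he
  refine ⟨if_neg hnew, if_neg hnew, if_neg hnew, fun y _ => if_neg hnew⟩

theorem ext_parent_fresh {p k : ℕ} (h : S.Slot p k) {z : E} :
    S.ext.Parent (S.fresh p k) z ↔ z = S.selfParentOf p k ∨ z = S.otherParentOf p k := by
  rw [Parent, S.ext_selfParent_fresh h, S.ext_otherParent_fresh h, Option.some_inj,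
    Option.some_inj, eq_comm, @eq_comm _ _ z]


theorem ancestor_fresh_of_le {p j k : ℕ} (h : S.Slot p k) (hj : j ≤ k) :
    S.ext.Ancestor (S.fresh p j) (S.fresh p k) := by
  induction k with
  | zero => obtain rfl := Nat.le_zero.1 hj; exact .refl
  | succ k ih =>
    rcases Nat.lt_or_ge j (k + 1) with hlt | hge
    · exact .head ((S.ext_parent_fresh h).2 (Or.inl (by simp [selfParentOf])))
        (ih (h.mono k.le_succ) (by omega))
    · obtain rfl : j = k + 1 := by omega
      exact .refl

theorem wit_ancestor_fresh {p k : ℕ} (h : S.Slot p k) : S.ext.Ancestor (S.wit p) (S.fresh p k) :=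
  (S.ancestor_fresh_of_le h (Nat.zero_le k)).trans
    (.single ((S.ext_parent_fresh (h.mono (Nat.zero_le k))).2 (Or.inl (by simp [selfParentOf]))))

theorem otherParentOf_ancestor {p k : ℕ} (h : S.Slot p k) :
    S.ext.Ancestor (S.otherParentOf p k) (S.fresh p k) :=
  .single ((S.ext_parent_fresh h).2 (Or.inr rfl))

theorem otherParentOf_collect (p i : ℕ) :
    S.otherParentOf p (quorum S.n - 1 + S.xPull p + i) = S.gossipEvent (peer p i) := by
  rw [otherParentOf, if_neg (by omega), if_neg (by omega)]
  congr 2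
  omega

theorem core_wit_ancestor_gossip {q u : ℕ} (hq : q ∈ S.core) (hu : u ∈ S.core) :
    S.ext.Ancestor (S.wit u) (S.gossipEvent q) := by
  have hg : S.Slot q (quorum S.n - 2) := S.slot_gossip hq le_rfl
  rcases eq_or_ne u q with rfl | hne
  · exact S.wit_ancestor_fresh hg
  · have hq' := S.mem_core.1 hq
    have hu' := S.mem_core.1 hu
    obtain ⟨i, hi, rfl⟩ := exists_peer_eq hq'.1 hu'.1 hne
    have hi' : i < quorum S.n - 1 := by omega
    have hstep := S.otherParentOf_ancestor (hg.mono (show i ≤ quorum S.n - 2 by omega))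
    rw [otherParentOf, if_pos hi'] at hstep
    exact (S.ancestor_fresh_of_le hg (by omega)).trans hstep

theorem gossip_ancestor_top {p i : ℕ} (hp1 : 1 ≤ p) (hpn : p ≤ S.n)
    (hi : i ≤ quorum S.n - 2) :
    S.ext.Ancestor (S.gossipEvent (peer p i)) (S.fresh p (S.topIdx p)) := by
  have htop := S.slot_topIdx hp1 hpn
  have hk : quorum S.n - 1 + S.xPull p + i ≤ S.topIdx p := by
    have := S.five_le_quorum; rw [topIdx_eq]; omega
  have hstep := S.otherParentOf_ancestor (htop.mono hk)
  rw [S.otherParentOf_collect] at hstep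
  exact (S.ancestor_fresh_of_le htop hk).trans hstep

theorem core_wit_ancestor_top {p u : ℕ} (hp1 : 1 ≤ p) (hpn : p ≤ S.n) (hu : u ∈ S.core) :
    S.ext.Ancestor (S.wit u) (S.fresh p (S.topIdx p)) :=
  (S.gossip_ancestor_top hp1 hpn (Nat.zero_le _)).trans
    (S.core_wit_ancestor_gossip (S.peer_mem_core p (Nat.zero_le _)) hu)

theorem x_ancestor_top {p : ℕ} (hp : p ∈ S.yesParties) :
    S.ext.Ancestor S.x (S.fresh p (S.topIdx p)) := by
  obtain ⟨hp1, hpn⟩ := Finset.mem_Icc.1 (S.yesParties_subset hp)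
  have htop := S.slot_topIdx hp1 hpn
  rcases eq_or_ne p 1 with rfl | hne
  · rw [← S.wit_one]; exact S.wit_ancestor_fresh htop
  · have hpull : S.xPull p = 1 := S.xPull_eq_one.2 ⟨hp, hne⟩
    have hk : quorum S.n - 1 ≤ S.topIdx p := by
      have := S.five_le_quorum; rw [topIdx_eq]; omega
    have hstep := S.otherParentOf_ancestor (htop.mono hk)
    rw [otherParentOf, if_neg (by omega), if_pos (by omega)] at hstep
    exact (S.ancestor_fresh_of_le htop hk).trans hstep

/-! ### The ancestors of a new event -/

def knownParties (p k : ℕ) : Finset ℕ :=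
  insert p (S.core ∪ if S.xPull p = 1 ∧ quorum S.n - 1 ≤ k then {1} else ∅)

def collected (p k : ℕ) : Finset ℕ :=
  (Finset.range (k + 1 - (quorum S.n - 1) - S.xPull p)).image (peer p)

def AncestorShape (p k : ℕ) (z : E) : Prop :=
  (∃ j ≤ k, z = S.fresh p j) ∨
  (∃ q ∈ S.collected p k, ∃ j ≤ quorum S.n - 2, z = S.fresh q j) ∨
  (z ∈ S.H.events ∧ ∃ u ∈ S.knownParties p k, S.H.Ancestor z (S.wit u))

theorem mem_collected {p k q : ℕ} :
    q ∈ S.collected p k ↔ ∃ i, quorum S.n - 1 + S.xPull p + i ≤ k ∧ peer p i = q := by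
  simp only [collected, Finset.mem_image, Finset.mem_range]
  exact exists_congr fun i => and_congr_left fun _ => by omega

theorem collected_spec {p k q : ℕ} (hk : k < S.chainLen p) (hq : q ∈ S.collected p k) :
    q ∈ S.core ∧ q ≠ p := by
  obtain ⟨i, hi, rfl⟩ := S.mem_collected.1 hq
  exact ⟨S.peer_mem_core p (by unfold chainLen at hk; omega), peer_ne p i⟩

theorem core_subset_knownParties (p k : ℕ) : S.core ⊆ S.knownParties p k :=
  fun _ hu => Finset.mem_insert_of_mem (Finset.mem_union_left _ hu)

theorem knownParties_bounds {p k u : ℕ} (hg : S.Slot p k) (hu : u ∈ S.knownParties p k) :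
    1 ≤ u ∧ u ≤ S.n := by
  simp only [knownParties, Finset.mem_insert, Finset.mem_union] at hu
  rcases hu with rfl | hu | hu
  · exact ⟨hg.1, hg.2.1⟩
  · exact S.party_of_mem_core hu
  · split at hu
    · rw [Finset.mem_singleton.1 hu]; have := S.seven_le; omega
    · simp at hu

theorem knownParties_gossip {q j : ℕ} (hq : q ∈ S.core) (hj : j ≤ quorum S.n - 2) :
    S.knownParties q j = S.core := by
  have := S.five_le_quorum
  rw [knownParties, if_neg (show ¬(S.xPull q = 1 ∧ quorum S.n - 1 ≤ j) by omega),
    Finset.union_empty, Finset.insert_eq_of_mem hq]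

theorem shape_wit {p k u : ℕ} (hg : S.Slot p k) (hu : u ∈ S.knownParties p k) :
    S.AncestorShape p k (S.wit u) :=
  have hu' := S.knownParties_bounds hg hu
  Or.inr (Or.inr ⟨(S.wit_spec hu'.1 hu'.2).1, u, hu, .refl⟩)

theorem shape_selfParentOf {p k j : ℕ} (hg : S.Slot p k) (hj : j ≤ k) :
    S.AncestorShape p k (S.selfParentOf p j) := by
  unfold selfParentOf
  split
  · exact S.shape_wit hg (Finset.mem_insert_self _ _)
  · exact Or.inl ⟨j - 1, by omega, rfl⟩

theorem shape_otherParentOf {p k j : ℕ} (hg : S.Slot p k) (hj : j ≤ k) :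
    S.AncestorShape p k (S.otherParentOf p j) := by
  unfold otherParentOf
  split_ifs with h1 h2
  · exact S.shape_wit hg (S.core_subset_knownParties p k (S.peer_mem_core p (by omega)))
  · have hpull : S.xPull p = 1 := by have := S.xPull_le p; omega
    rw [← S.wit_one]
    refine S.shape_wit hg (Finset.mem_insert_of_mem (Finset.mem_union_right _ ?_))
    rw [if_pos ⟨hpull, by omega⟩]
    exact Finset.mem_singleton_self 1
  · exact Or.inr (Or.inl ⟨_, S.mem_collected.2 ⟨_, by omega, rfl⟩, _, le_rfl, rfl⟩)

theorem shape_parent_gossip {p k q j : ℕ} {y : E} (hg : S.Slot p k) (hq : q ∈ S.collected p k)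
    (hj : j ≤ quorum S.n - 2) (hp : S.ext.Parent (S.fresh q j) y) : S.AncestorShape p k y := by
  have hqc := (S.collected_spec hg.2.2 hq).1
  rcases (S.ext_parent_fresh (S.slot_gossip hqc hj)).1 hp with rfl | rfl
  · unfold selfParentOf
    split
    · exact S.shape_wit hg (S.core_subset_knownParties p k hqc)
    · exact Or.inr (Or.inl ⟨q, hq, j - 1, by omega, rfl⟩)
  · have := S.five_le_quorum
    rw [otherParentOf, if_pos (show j < quorum S.n - 1 by omega)]
    exact S.shape_wit hg (S.core_subset_knownParties p k (S.peer_mem_core q hj))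

theorem shape_parent {p k : ℕ} {z y : E} (hg : S.Slot p k) (hz : S.AncestorShape p k z)
    (hp : S.ext.Parent z y) : S.AncestorShape p k y := by
  rcases hz with ⟨j, hj, rfl⟩ | ⟨q, hq, j, hj, rfl⟩ | ⟨hz, u, hu, ha⟩
  · rcases (S.ext_parent_fresh (hg.mono hj)).1 hp with rfl | rfl
    exacts [S.shape_selfParentOf hg hj, S.shape_otherParentOf hg hj]
  · exact S.shape_parent_gossip hg hq hj hp
  · have hp' := (S.extends_ext.parent_iff hz).1 hp
    exact Or.inr (Or.inr ⟨hp'.elim (S.valid.selfParent_mem _ hz _)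
      (S.valid.otherParent_mem _ hz _), u, hu, ha.tail hp'⟩)

theorem ancestorShape {p k : ℕ} {z : E} (hg : S.Slot p k) (h : S.ext.Ancestor z (S.fresh p k)) :
    S.AncestorShape p k z := by
  induction h with
  | refl => exact Or.inl ⟨k, le_rfl, rfl⟩
  | tail _ hp ih => exact S.shape_parent hg ih hp


theorem ancestor_fresh_cases {p k : ℕ} {z : E} (hg : S.Slot p k)
    (h : S.ext.Ancestor z (S.fresh p k)) (hz : z ∉ S.H.events) :
    (∃ j ≤ k, z = S.fresh p j) ∨
      (∃ q ∈ S.collected p k, ∃ j ≤ quorum S.n - 2, z = S.fresh q j) := by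
  rcases S.ancestorShape hg h with h | h | h
  exacts [Or.inl h, Or.inr h, absurd h.1 hz]

theorem H_ancestor_fresh {p k : ℕ} {z : E} (hg : S.Slot p k)
    (h : S.ext.Ancestor z (S.fresh p k)) (hz : z ∈ S.H.events) :
    ∃ u ∈ S.knownParties p k, S.H.Ancestor z (S.wit u) := by
  rcases S.ancestorShape hg h with ⟨j, hj, rfl⟩ | ⟨q, hq, j, hj, rfl⟩ | h
  · exact absurd hz (S.fresh_not_mem_H (hg.mono hj))
  · exact absurd hz (S.fresh_not_mem_H (S.slot_gossip (S.collected_spec hg.2.2 hq).1 hj))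
  · exact h.2

theorem fresh_ancestor_fresh {p k q j : ℕ} (hg : S.Slot p k) (hg' : S.Slot q j)
    (h : S.ext.Ancestor (S.fresh q j) (S.fresh p k)) :
    (q = p ∧ j ≤ k) ∨ (q ∈ S.collected p k ∧ j ≤ quorum S.n - 2) := by
  rcases S.ancestor_fresh_cases hg h (S.fresh_not_mem_H hg') with
    ⟨j', hj', he⟩ | ⟨q', hq', j', hj', he⟩
  · obtain ⟨rfl, rfl⟩ := S.fresh_inj hg' (hg.mono hj') he
    exact Or.inl ⟨rfl, hj'⟩
  · obtain ⟨rfl, rfl⟩ := S.fresh_inj hg' (S.slot_gossip (S.collected_spec hg.2.2 hq').1 hj') he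
    exact Or.inr ⟨hq', hj'⟩

theorem ancestor_mem_ext {e z : E} (he : e ∈ S.ext.events) (h : S.ext.Ancestor z e) :
    z ∈ S.ext.events := by
  rcases S.mem_ext_events.1 he with he | ⟨p, k, hg, rfl⟩
  · exact S.mem_ext_events.2 (Or.inl (S.extends_ext.ancestor_mem S.valid he h))
  · rcases S.ancestorShape hg h with ⟨j, hj, rfl⟩ | ⟨q, hq, j, hj, rfl⟩ | h
    · exact S.fresh_mem_ext (hg.mono hj)
    · exact S.fresh_mem_ext (S.slot_gossip (S.collected_spec hg.2.2 hq).1 hj)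
    · exact S.mem_ext_events.2 (Or.inl h.1)

theorem witness_ancestor_fresh {p k : ℕ} {w : E} (hg : S.Slot p k) (hw : w ∈ S.H.events)
    (hww : S.H.Witness w) (hwr : S.H.round w = S.r) (h : S.ext.Ancestor w (S.fresh p k)) :
    ∃ u ∈ S.knownParties p k, w = S.wit u := by
  obtain ⟨u, hu, ha⟩ := S.H_ancestor_fresh hg h hw
  obtain ⟨hu1, hun⟩ := S.knownParties_bounds hg hu
  exact ⟨u, hu, S.eq_wit_of_ancestor hu1 hun hw hww hwr ha⟩

theorem eq_of_between_witness_fresh {p k : ℕ} {w z : E} (hg : S.Slot p k)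
    (hw : w ∈ S.H.events) (hww : S.H.Witness w) (hwr : S.H.round w = S.r)
    (hz : z ∈ S.H.events) (hwz : S.ext.Ancestor w z) (hzf : S.ext.Ancestor z (S.fresh p k)) :
    z = w := by
  obtain ⟨u, hu, ha⟩ := S.H_ancestor_fresh hg hzf hz
  obtain ⟨hu1, hun⟩ := S.knownParties_bounds hg hu
  have hwz' := (S.extends_ext.ancestor_iff S.valid hz).1 hwz
  have hwu : w = S.wit u := S.eq_wit_of_ancestor hu1 hun hw hww hwr (ha.trans hwz')
  rw [← hwu] at ha
  exact S.valid.acyclic z hz w hw ha hwz'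

theorem H_ancestor_fresh_of_creator {a : E} {p k : ℕ} (ha : a ∈ S.H.events) (hg : S.Slot p k)
    (hc : S.creator a = p) : S.ext.Ancestor a (S.fresh p k) := by
  obtain ⟨hwm, hwwit, hwrnd, hwc⟩ := S.wit_spec hg.1 hg.2.1
  rcases S.forkFree a ha (S.wit p) hwm (hc.trans hwc.symm) with h | h
  · exact (S.wit_ancestor_fresh hg).trans ((S.extends_ext.ancestor_iff S.valid hwm).2 h)
  · obtain rfl := S.eq_of_witness_ancestor _ hwm hwwit hwrnd a ha (hc.trans hwc.symm) h
    exact S.wit_ancestor_fresh hg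

theorem forkFree_ext : ForkFree S.creator S.ext := by
  intro a ha b hb hc
  rcases S.mem_ext_events.1 ha with ha | ⟨p, k, hg, rfl⟩ <;>
    rcases S.mem_ext_events.1 hb with hb | ⟨p', k', hg', rfl⟩
  · exact (S.forkFree a ha b hb hc).imp (S.extends_ext.ancestor_iff S.valid hb).2
      (S.extends_ext.ancestor_iff S.valid ha).2
  · exact Or.inl (S.H_ancestor_fresh_of_creator ha hg' (hc.trans (S.creator_fresh hg')))
  · exact Or.inr (S.H_ancestor_fresh_of_creator hb hg (hc.symm.trans (S.creator_fresh hg)))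
  · obtain rfl : p = p' := by rw [← S.creator_fresh hg, hc, S.creator_fresh hg']
    rcases le_total k k' with h | h
    exacts [Or.inl (S.ancestor_fresh_of_le hg' h), Or.inr (S.ancestor_fresh_of_le hg h)]

theorem ext_sees_iff {e z : E} (he : e ∈ S.ext.events) :
    Sees S.creator S.ext e z ↔ S.ext.Ancestor z e :=
  S.forkFree_ext.sees_iff fun _ h => S.ancestor_mem_ext he h

theorem ext_round_wit {p : ℕ} (hp1 : 1 ≤ p) (hpn : p ≤ S.n) :
    S.ext.round (S.wit p) = S.r := by
  rw [S.extends_ext.round_eq (S.wit_spec hp1 hpn).1]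
  exact (S.wit_spec hp1 hpn).2.2.1

theorem ext_round_fresh_of_lt {p k : ℕ} (hg : S.Slot p k) (hk : k < S.topIdx p) :
    S.ext.round (S.fresh p k) = S.r := by
  rw [S.ext_round_fresh hg, if_neg hk.ne]

theorem ext_round_selfParentOf {p k : ℕ} (hg : S.Slot p k) :
    S.ext.round (S.selfParentOf p k) = S.r := by
  unfold selfParentOf
  split
  · exact S.ext_round_wit hg.1 hg.2.1
  · exact S.ext_round_fresh_of_lt (hg.mono (by omega)) (by have := hg.le_topIdx; omega)

theorem ext_round_otherParentOf {p k : ℕ} (hg : S.Slot p k) :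
    S.ext.round (S.otherParentOf p k) = S.r := by
  have := S.five_le_quorum
  unfold otherParentOf
  split_ifs with h1 h2
  · have := S.party_of_mem_core (S.peer_mem_core p (show k ≤ quorum S.n - 2 by omega))
    exact S.ext_round_wit this.1 this.2
  · rw [← S.wit_one]; exact S.ext_round_wit le_rfl (by have := S.seven_le; omega)
  · have hq := S.peer_mem_core p
      (show k - (quorum S.n - 1) - S.xPull p ≤ quorum S.n - 2 by
        have := hg.2.2; unfold chainLen at this; omega)
    have := S.party_of_mem_core hq
    refine S.ext_round_fresh_of_lt (S.slot_gossip hq le_rfl) ?_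
    rw [topIdx_eq]; omega

theorem ext_maxParentRound_fresh {p k : ℕ} (hg : S.Slot p k) :
    S.ext.maxParentRound (S.fresh p k) = S.r := by
  rw [maxParentRound, S.ext_selfParent_fresh hg, S.ext_otherParent_fresh hg]
  simp only [S.ext_round_selfParentOf hg, S.ext_round_otherParentOf hg, max_self]

theorem ext_witness_fresh_iff {p k : ℕ} (hg : S.Slot p k) :
    S.ext.Witness (S.fresh p k) ↔ k = S.topIdx p := by
  simp only [Witness, S.fresh_mem_ext hg, true_and, S.ext_selfParent_fresh hg, Option.some.injEq,
    forall_eq', S.ext_round_selfParentOf hg, S.ext_round_fresh hg]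
  split_ifs with h <;> simp [h]

theorem eq_top_of_ext_round {e : E} (he : e ∈ S.ext.events) (hr : S.ext.round e = S.r + 1) :
    ∃ p, 1 ≤ p ∧ p ≤ S.n ∧ e = S.fresh p (S.topIdx p) := by
  rcases S.mem_ext_events.1 he with he' | ⟨p, k, hg, rfl⟩
  · rw [S.extends_ext.round_eq he'] at hr
    have := S.round_le e he'
    omega
  · rw [S.ext_round_fresh hg] at hr
    split_ifs at hr with hk
    · exact ⟨p, hg.1, hg.2.1, by rw [hk]⟩
    · omega

theorem ext_witness_round_eq {w : E} (hw : S.ext.Witness w) (hr : S.ext.round w = S.r) :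
    w ∈ S.H.events ∧ S.H.Witness w ∧ S.H.round w = S.r := by
  rcases S.mem_ext_events.1 hw.1 with hw' | ⟨p, k, hg, rfl⟩
  · exact ⟨hw', (S.extends_ext.witness_iff S.valid hw').1 hw,
      S.extends_ext.round_eq hw' ▸ hr⟩
  · rw [S.ext_round_fresh hg, if_pos ((S.ext_witness_fresh_iff hg).1 hw)] at hr
    omega


/-! ### Promotion to round `r + 1` -/

theorem creator_gossipEvent {q : ℕ} (hq : q ∈ S.core) : S.creator (S.gossipEvent q) = q :=
  S.creator_fresh (S.slot_gossip hq le_rfl)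

/-- The `quorum S.n` events through which the top event of `p` strongly sees every core
witness. -/
def topSupport (p : ℕ) : Finset E :=
  insert (S.fresh p (S.topIdx p))
    ((Finset.range (quorum S.n - 1)).image fun i => S.gossipEvent (peer p i))

theorem mem_topSupport {p : ℕ} {z : E} : z ∈ S.topSupport p ↔
    z = S.fresh p (S.topIdx p) ∨ ∃ i < quorum S.n - 1, z = S.gossipEvent (peer p i) := by
  simp only [topSupport, Finset.mem_insert, Finset.mem_image, Finset.mem_range, eq_comm]

theorem creator_image_topSupport {p : ℕ} (hp1 : 1 ≤ p) (hpn : p ≤ S.n) :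
    (S.topSupport p).image S.creator =
      insert p ((Finset.range (quorum S.n - 1)).image (peer p)) := by
  rw [topSupport, Finset.image_insert, Finset.image_image, S.creator_fresh (S.slot_topIdx hp1 hpn)]
  congr 1
  refine Finset.image_congr fun i hi => S.creator_gossipEvent (S.peer_mem_core p ?_)
  have := Finset.mem_range.1 hi
  omega

theorem topSupport_spec {p : ℕ} (hp1 : 1 ≤ p) (hpn : p ≤ S.n) :
    Set.InjOn S.creator (S.topSupport p) ∧ (S.topSupport p).card = quorum S.n := by
  have hm := S.five_le_quorum
  have himage : ((S.topSupport p).image S.creator).card = quorum S.n := by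
    rw [S.creator_image_topSupport hp1 hpn, Finset.card_insert_of_notMem,
      Finset.card_image_of_injective _ (peer_injective p), Finset.card_range]
    · omega
    · simp only [Finset.mem_image, not_exists, not_and]
      exact fun i _ => peer_ne p i
  have hle : (S.topSupport p).card ≤ quorum S.n := by
    have := (Finset.range (quorum S.n - 1)).card_image_le (f := fun i => S.gossipEvent (peer p i))
    rw [Finset.card_range] at this
    exact (Finset.card_insert_le _ _).trans (by omega)
  have hge := (S.topSupport p).card_image_le (f := S.creator)
  exact ⟨Finset.card_image_iff.1 (by omega), by omega⟩

theorem stronglySees_top {p u : ℕ} (hp1 : 1 ≤ p) (hpn : p ≤ S.n) (hu : u ∈ S.core) :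
    StronglySees S.creator S.n S.ext (S.fresh p (S.topIdx p)) (S.wit u) := by
  have htop := S.slot_topIdx hp1 hpn
  obtain ⟨hinj, hcard⟩ := S.topSupport_spec hp1 hpn
  refine ⟨S.topSupport p, fun z hz => S.ancestor_mem_ext (S.fresh_mem_ext htop) ?_,
    fun z hz => ?_, hinj, hcard ▸ two_mul_lt_three_mul_quorum S.n⟩
  · rcases S.mem_topSupport.1 hz with rfl | ⟨i, hi, rfl⟩
    exacts [.refl, S.gossip_ancestor_top hp1 hpn (by omega)]
  rw [S.ext_sees_iff (S.fresh_mem_ext htop)]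
  rcases S.mem_topSupport.1 hz with rfl | ⟨i, hi, rfl⟩
  · exact ⟨.refl,
      (S.ext_sees_iff (S.fresh_mem_ext htop)).2 (S.core_wit_ancestor_top hp1 hpn hu)⟩
  · have hq := S.peer_mem_core p (show i ≤ quorum S.n - 2 by omega)
    exact ⟨S.gossip_ancestor_top hp1 hpn (by omega),
      (S.ext_sees_iff (S.fresh_mem_ext (S.slot_gossip hq le_rfl))).2
        (S.core_wit_ancestor_gossip hq hu)⟩

theorem coreWitnesses_spec :
    Set.InjOn S.creator S.coreWitnesses ∧ S.coreWitnesses.card = quorum S.n := by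
  have hcr : ∀ u ∈ S.core, S.creator (S.wit u) = u := fun u hu =>
    S.creator_wit (S.party_of_mem_core hu).1 (S.party_of_mem_core hu).2
  have himage : S.coreWitnesses.image S.creator = S.core := by
    rw [coreWitnesses, Finset.image_image,
      Finset.image_congr (f := S.creator ∘ S.wit) (g := id) fun u hu => hcr u hu, Finset.image_id]
  have hinj : Set.InjOn S.wit S.core := fun u hu v hv h => by
    rw [← hcr u hu, ← hcr v hv, h]
  have hcard : S.coreWitnesses.card = quorum S.n := by
    rw [coreWitnesses, Finset.card_image_of_injOn hinj, S.core_card]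
  exact ⟨Finset.card_image_iff.1 (by rw [himage, hcard, S.core_card]), hcard⟩

theorem promotedAt_top {p : ℕ} (hp1 : 1 ≤ p) (hpn : p ≤ S.n) :
    PromotedAt S.creator S.n S.ext (S.fresh p (S.topIdx p)) S.r := by
  obtain ⟨hinj, hcard⟩ := S.coreWitnesses_spec
  refine ⟨S.coreWitnesses, fun w hw => ?_, fun w hw => ?_, hinj,
    hcard ▸ two_mul_lt_three_mul_quorum S.n⟩ <;>
  obtain ⟨u, hu, rfl⟩ := Finset.mem_image.1 hw <;>
  obtain ⟨hu1, hun⟩ := S.party_of_mem_core hu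
  · exact S.wit_mem_ext hu1 hun
  · have hspec := S.wit_spec hu1 hun
    exact ⟨(S.extends_ext.witness_iff S.valid hspec.1).2 hspec.2.1, S.ext_round_wit hu1 hun,
      S.stronglySees_top hp1 hpn hu⟩

theorem creator_between {p k : ℕ} {w z : E} (hg : S.Slot p k) (hw : w ∈ S.H.events)
    (hww : S.H.Witness w) (hwr : S.H.round w = S.r) (hwz : S.ext.Ancestor w z)
    (hzf : S.ext.Ancestor z (S.fresh p k)) :
    S.creator z = S.creator w ∨ S.creator z = p ∨
      (S.creator z ∈ S.collected p k ∧ S.creator w ∈ S.core) := by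
  by_cases hz : z ∈ S.H.events
  · exact Or.inl (by rw [S.eq_of_between_witness_fresh hg hw hww hwr hz hwz hzf])
  rcases S.ancestor_fresh_cases hg hzf hz with ⟨j, hj, rfl⟩ | ⟨q, hq, j, hj, rfl⟩
  · exact Or.inr (Or.inl (S.creator_fresh (hg.mono hj)))
  · have hqc := (S.collected_spec hg.2.2 hq).1
    have hgq := S.slot_gossip hqc hj
    obtain ⟨u, hu, rfl⟩ := S.witness_ancestor_fresh hgq hw hww hwr hwz
    rw [S.knownParties_gossip hqc hj] at hu
    rw [S.creator_fresh hgq, S.creator_wit (S.party_of_mem_core hu).1 (S.party_of_mem_core hu).2]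
    exact Or.inr (Or.inr ⟨hq, hu⟩)

theorem stronglySees_fresh {p k : ℕ} {w : E} (hg : S.Slot p k) (hw : w ∈ S.H.events)
    (hww : S.H.Witness w) (hwr : S.H.round w = S.r)
    (hss : StronglySees S.creator S.n S.ext (S.fresh p k) w) :
    S.creator w ∈ S.core ∧
      quorum S.n ≤ (insert (S.creator w) (insert p (S.collected p k))).card := by
  obtain ⟨s, -, hs, hinj, hcard⟩ := hss
  have hms : quorum S.n ≤ (s.image S.creator).card := by
    rw [Finset.card_image_of_injOn hinj]; exact quorum_le_of_two_mul_lt hcard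
  have hcl : ∀ z ∈ s, S.creator z = S.creator w ∨ S.creator z = p ∨
      (S.creator z ∈ S.collected p k ∧ S.creator w ∈ S.core) := fun z hz =>
    S.creator_between hg hw hww hwr (hs z hz).2.1 (hs z hz).1.1
  have hcore : S.creator w ∈ S.core := by
    by_contra hnot
    have hsub : s.image S.creator ⊆ {S.creator w, p} := fun u hu => by
      obtain ⟨z, hz, rfl⟩ := Finset.mem_image.1 hu
      rcases hcl z hz with h | h | h
      · simp [h]
      · simp [h]
      · exact absurd h.2 hnot
    have := (Finset.card_le_card hsub).trans (Finset.card_le_two (a := S.creator w) (b := p))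
    have := S.five_le_quorum
    omega
  refine ⟨hcore, hms.trans (Finset.card_le_card fun u hu => ?_)⟩
  obtain ⟨z, hz, rfl⟩ := Finset.mem_image.1 hu
  rcases hcl z hz with h | h | h <;> simp [h]

theorem collected_subset_core {p k : ℕ} (hk : k < S.chainLen p) : S.collected p k ⊆ S.core :=
  fun _ hq => (S.collected_spec hk hq).1

theorem collected_card_le {p k : ℕ} (hk : k < S.topIdx p) :
    (S.collected p k).card ≤ quorum S.n - 2 := by
  refine Finset.card_image_le.trans ?_
  rw [Finset.card_range]
  have := S.five_le_quorum
  rw [topIdx_eq] at hk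
  omega

/-- Below its top, a new event has collected at most `quorum S.n - 2` gossip events, so it
strongly sees at most two round-`r` witnesses. -/
theorem not_promotedAt_fresh {p k : ℕ} (hg : S.Slot p k) (hk : k < S.topIdx p) :
    ¬ PromotedAt S.creator S.n S.ext (S.fresh p k) S.r := by
  have hm := S.five_le_quorum
  rintro ⟨s, -, hs, hinj, hcard⟩
  have hms : quorum S.n ≤ s.card := quorum_le_of_two_mul_lt hcard
  have hcoll := S.collected_card_le hk
  have hcreators : ∀ w ∈ s, S.creator w ∈ S.core \ insert p (S.collected p k) ∧
      quorum S.n - 2 ≤ (S.collected p k).card := by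
    intro w hw
    obtain ⟨hww, hwr, hss⟩ := hs w hw
    obtain ⟨hwH, hwwH, hwrH⟩ := S.ext_witness_round_eq hww hwr
    obtain ⟨hcore, hle⟩ := S.stronglySees_fresh hg hwH hwwH hwrH hss
    have h1 := Finset.card_insert_le p (S.collected p k)
    have h2 := Finset.card_insert_le (S.creator w) (insert p (S.collected p k))
    refine ⟨Finset.mem_sdiff.2 ⟨hcore, fun hin => ?_⟩, by omega⟩
    rw [Finset.insert_eq_of_mem hin] at hle
    omega
  obtain ⟨w, hw⟩ : s.Nonempty := Finset.card_pos.1 (by omega)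
  have hsub : s.image S.creator ⊆ S.core \ S.collected p k := fun u hu => by
    obtain ⟨w, hw, rfl⟩ := Finset.mem_image.1 hu
    exact Finset.sdiff_subset_sdiff le_rfl (Finset.subset_insert _ _) (hcreators w hw).1
  have := Finset.card_le_card hsub
  rw [Finset.card_image_of_injOn hinj, Finset.card_sdiff_of_subset
    (S.collected_subset_core hg.2.2), S.core_card] at this
  have := (hcreators w hw).2
  omega

theorem ssWitnesses_top {p : ℕ} (hp1 : 1 ≤ p) (hpn : p ≤ S.n) :
    ssWitnesses S.creator S.n S.ext (S.fresh p (S.topIdx p)) S.r = S.coreWitnesses := by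
  ext w
  simp only [ssWitnesses, Finset.mem_filter]
  constructor
  · rintro ⟨-, hww, hwr, hss⟩
    obtain ⟨hwH, hwwH, hwrH⟩ := S.ext_witness_round_eq hww hwr
    have hcore := (S.stronglySees_fresh (S.slot_topIdx hp1 hpn) hwH hwwH hwrH hss).1
    exact Finset.mem_image.2 ⟨_, hcore, (S.eq_wit ⟨hwH, hwwH, hwrH, rfl⟩).symm⟩
  · intro hw
    obtain ⟨u, hu, rfl⟩ := Finset.mem_image.1 hw
    obtain ⟨hu1, hun⟩ := S.party_of_mem_core hu
    have hspec := S.wit_spec hu1 hun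
    exact ⟨S.wit_mem_ext hu1 hun, (S.extends_ext.witness_iff S.valid hspec.1).2 hspec.2.1,
      S.ext_round_wit hu1 hun, S.stronglySees_top hp1 hpn hu⟩


/-! ### Validity of the extension -/

theorem selfParentOf_mem_ext {p k : ℕ} (hg : S.Slot p k) : S.selfParentOf p k ∈ S.ext.events :=
  S.ancestor_mem_ext (S.fresh_mem_ext hg) (.single ((S.ext_parent_fresh hg).2 (Or.inl rfl)))

theorem otherParentOf_mem_ext {p k : ℕ} (hg : S.Slot p k) :
    S.otherParentOf p k ∈ S.ext.events :=
  S.ancestor_mem_ext (S.fresh_mem_ext hg) (S.otherParentOf_ancestor hg)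

theorem creator_selfParentOf {p k : ℕ} (hg : S.Slot p k) :
    S.creator (S.selfParentOf p k) = p := by
  unfold selfParentOf
  split
  · exact S.creator_wit hg.1 hg.2.1
  · exact S.creator_fresh (hg.mono (Nat.sub_le k 1))

theorem creator_otherParentOf_ne {p k : ℕ} (hg : S.Slot p k) :
    S.creator (S.otherParentOf p k) ≠ p := by
  have := S.five_le_quorum
  unfold otherParentOf
  split_ifs with h1 h2
  · have hq := S.party_of_mem_core (S.peer_mem_core p (show k ≤ quorum S.n - 2 by omega))
    rw [S.creator_wit hq.1 hq.2]
    exact peer_ne p k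
  · have hpull : S.xPull p = 1 := by have := S.xPull_le p; omega
    rw [S.x_creator]
    exact (S.xPull_eq_one.1 hpull).2.symm
  · have := hg.2.2
    unfold chainLen at this
    rw [S.creator_gossipEvent (S.peer_mem_core p (by omega))]
    exact peer_ne p _

theorem vote_later_top {p : ℕ} (hp1 : 1 ≤ p) (hpn : p ≤ S.n) {x : E} (hx : x ∈ S.ext.events)
    (hwx : S.ext.Witness x) (hr : S.ext.round x + 1 < S.ext.round (S.fresh p (S.topIdx p))) :
    S.ext.vote (S.fresh p (S.topIdx p)) x =
      if ¬ (S.c ∣ (S.ext.round (S.fresh p (S.topIdx p)) - S.ext.round x)) then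
        majorityVote S.ext x (ssWitnesses S.creator S.n S.ext (S.fresh p (S.topIdx p))
          (S.ext.round (S.fresh p (S.topIdx p)) - 1))
      else if 2 * S.n < 3 * ((ssWitnesses S.creator S.n S.ext (S.fresh p (S.topIdx p))
          (S.ext.round (S.fresh p (S.topIdx p)) - 1)).filter
          (fun w => S.ext.vote w x = majorityVote S.ext x (ssWitnesses S.creator S.n S.ext
            (S.fresh p (S.topIdx p)) (S.ext.round (S.fresh p (S.topIdx p)) - 1)))).card then
        majorityVote S.ext x (ssWitnesses S.creator S.n S.ext (S.fresh p (S.topIdx p))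
          (S.ext.round (S.fresh p (S.topIdx p)) - 1))
      else middleBit (S.sig (S.fresh p (S.topIdx p))) := by
  have htop := S.slot_topIdx hp1 hpn
  have hrt : S.ext.round (S.fresh p (S.topIdx p)) = S.r + 1 := by
    rw [S.ext_round_fresh htop, if_pos rfl]
  rw [hrt] at hr ⊢
  have hxH : x ∈ S.H.events := by
    rcases S.mem_ext_events.1 hx with hxH | ⟨q, j, hg, rfl⟩
    · exact hxH
    · rw [S.ext_round_fresh hg, if_pos ((S.ext_witness_fresh_iff hg).1 hwx)] at hr
      omega
  have hsub : ∀ w ∈ S.coreWitnesses, w ∈ S.H.events := fun w hw => by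
    obtain ⟨u, hu, rfl⟩ := Finset.mem_image.1 hw
    exact (S.wit_spec (S.party_of_mem_core hu).1 (S.party_of_mem_core hu).2).1
  rw [S.ext_vote_fresh htop, if_neg (by omega), Nat.add_sub_cancel, S.ssWitnesses_top hp1 hpn,
    S.extends_ext.majorityVote_eq hxH hsub, S.extends_ext.round_eq hxH,
    Finset.filter_congr fun w hw => by rw [S.extends_ext.vote_eq (hsub w hw) hxH]]
  rfl

theorem validAt_fresh {p k : ℕ} (hg : S.Slot p k) :
    ValidAt S.creator S.sig S.n S.c S.ext (S.fresh p k) where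
  creator_mem := by rw [S.creator_fresh hg]; exact ⟨hg.1, hg.2.1⟩
  selfParent_mem y hy := by
    rw [S.ext_selfParent_fresh hg, Option.some_inj] at hy
    exact hy ▸ S.selfParentOf_mem_ext hg
  otherParent_mem y hy := by
    rw [S.ext_otherParent_fresh hg, Option.some_inj] at hy
    exact hy ▸ S.otherParentOf_mem_ext hg
  selfParent_creator y hy := by
    rw [S.ext_selfParent_fresh hg, Option.some_inj] at hy
    rw [← hy, S.creator_selfParentOf hg, S.creator_fresh hg]
  otherParent_creator y hy := by
    rw [S.ext_otherParent_fresh hg, Option.some_inj] at hy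
    rw [← hy, S.creator_fresh hg]
    exact S.creator_otherParentOf_ne hg
  round_genesis h := absurd h (by rw [S.ext_selfParent_fresh hg]; exact Option.some_ne_none _)
  round_spec _ := by
    rw [S.ext_maxParentRound_fresh hg]
    rcases hg.le_topIdx.lt_or_eq with hk | rfl
    · rw [if_neg (S.not_promotedAt_fresh hg hk), S.ext_round_fresh_of_lt hg hk]
    · rw [if_pos (S.promotedAt_top hg.1 hg.2.1), S.ext_round_fresh hg, if_pos rfl]
  vote_first hwe x _ _ hr := by
    obtain rfl := (S.ext_witness_fresh_iff hg).1 hwe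
    rw [S.ext_round_fresh hg, if_pos rfl] at hr
    rw [S.ext_vote_fresh hg, if_pos (by omega), S.ext_sees_iff (S.fresh_mem_ext hg)]
  vote_later hwe x hx hwx hr := by
    obtain rfl := (S.ext_witness_fresh_iff hg).1 hwe
    exact S.vote_later_top hg.1 hg.2.1 hx hwx hr

theorem self_not_mem_collected (p k : ℕ) : p ∉ S.collected p k := fun h => by
  obtain ⟨i, -, hi⟩ := S.mem_collected.1 h
  exact peer_ne p i hi

theorem collected_eq_empty {p k : ℕ} (hk : k ≤ quorum S.n - 2) : S.collected p k = ∅ := by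
  have := S.five_le_quorum
  rw [collected, show k + 1 - (quorum S.n - 1) - S.xPull p = 0 by omega, Finset.range_zero,
    Finset.image_empty]

theorem eq_of_fresh_ancestor_fresh {p k q j : ℕ} (hg : S.Slot p k) (hg' : S.Slot q j)
    (h1 : S.ext.Ancestor (S.fresh p k) (S.fresh q j))
    (h2 : S.ext.Ancestor (S.fresh q j) (S.fresh p k)) : p = q ∧ k = j := by
  rcases S.fresh_ancestor_fresh hg' hg h1 with ⟨rfl, h⟩ | ⟨hp, hk⟩ <;>
    rcases S.fresh_ancestor_fresh hg hg' h2 with ⟨hqp, h'⟩ | ⟨hq, hj⟩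
  · exact ⟨rfl, by omega⟩
  · exact absurd hq (S.self_not_mem_collected p k)
  · exact absurd (hqp ▸ hp) (S.self_not_mem_collected q j)
  · rw [S.collected_eq_empty hk] at hq
    exact absurd hq (Finset.notMem_empty q)

theorem valid_ext : S.ext.Valid S.creator S.sig S.ts S.n S.c := by
  refine S.extends_ext.valid S.valid (fun x hx hxH hwx y hy => ?_) (fun e he heH => ?_)
    (fun a ha haH b hb hbH hab hba => ?_)
  · obtain ⟨p, k, hg, rfl⟩ := (S.mem_ext_events.1 hx).resolve_left hxH
    rw [S.ext_round_fresh hg, if_pos ((S.ext_witness_fresh_iff hg).1 hwx)]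
    exact (S.round_le y hy).trans (Nat.le_succ _)
  · obtain ⟨p, k, hg, rfl⟩ := (S.mem_ext_events.1 he).resolve_left heH
    exact S.validAt_fresh hg
  · obtain ⟨p, k, hg, rfl⟩ := (S.mem_ext_events.1 ha).resolve_left haH
    obtain ⟨q, j, hg', rfl⟩ := (S.mem_ext_events.1 hb).resolve_left hbH
    obtain ⟨rfl, rfl⟩ := S.eq_of_fresh_ancestor_fresh hg hg' hab hba
    rfl


/-! ### The round-`r + 1` witnesses -/

theorem existsUnique_top {p : ℕ} (hp1 : 1 ≤ p) (hpn : p ≤ S.n) :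
    ∃! w, w ∈ S.ext.events ∧ S.ext.Witness w ∧ S.ext.round w = S.r + 1 ∧
      S.creator w = p := by
  have htop := S.slot_topIdx hp1 hpn
  refine ⟨S.fresh p (S.topIdx p), ⟨S.fresh_mem_ext htop, (S.ext_witness_fresh_iff htop).2 rfl,
    by rw [S.ext_round_fresh htop, if_pos rfl], S.creator_fresh htop⟩, ?_⟩
  rintro w ⟨hw, -, hr, rfl⟩
  obtain ⟨q, hq1, hqn, rfl⟩ := S.eq_top_of_ext_round hw hr
  rw [S.creator_fresh (S.slot_topIdx hq1 hqn)]

theorem top_antichain {w w' : E} (hw : w ∈ S.ext.events) (hr : S.ext.round w = S.r + 1)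
    (hw' : w' ∈ S.ext.events) (hr' : S.ext.round w' = S.r + 1) (h : S.ext.Ancestor w w') :
    w = w' := by
  obtain ⟨p, hp1, hpn, rfl⟩ := S.eq_top_of_ext_round hw hr
  obtain ⟨q, hq1, hqn, rfl⟩ := S.eq_top_of_ext_round hw' hr'
  rcases S.fresh_ancestor_fresh (S.slot_topIdx hq1 hqn) (S.slot_topIdx hp1 hpn) h with
    ⟨rfl, -⟩ | ⟨-, hle⟩
  · rfl
  · have := S.five_le_quorum
    rw [topIdx_eq] at hle
    omega

theorem x_ancestor_top_iff {p : ℕ} (hp1 : 1 ≤ p) (hpn : p ≤ S.n) :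
    S.ext.Ancestor S.x (S.fresh p (S.topIdx p)) ↔ p ∈ S.yesParties := by
  refine ⟨fun h => ?_, S.x_ancestor_top⟩
  have htop := S.slot_topIdx hp1 hpn
  obtain ⟨u, hu, hxu⟩ := S.witness_ancestor_fresh htop S.x_mem S.x_witness S.x_round h
  obtain rfl : u = 1 := by
    obtain ⟨h1, h2⟩ := S.knownParties_bounds htop hu
    rw [← S.creator_wit h1 h2, ← hxu, S.x_creator]
  simp only [knownParties, Finset.mem_insert, Finset.mem_union] at hu
  rcases hu with rfl | h | h
  · exact S.one_mem_yesParties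
  · exact absurd (S.mem_core.1 h).1 (by norm_num)
  · split at h
    · rename_i hc; exact (S.xPull_eq_one.1 hc.1).1
    · simp at h

theorem card_filter_tops (Q : E → Prop) :
    (S.ext.events.filter fun w => S.ext.Witness w ∧ S.ext.round w = S.r + 1 ∧ Q w).card =
      ((Finset.Icc 1 S.n).filter fun p => Q (S.fresh p (S.topIdx p))).card := by
  have himage : (S.ext.events.filter fun w => S.ext.Witness w ∧ S.ext.round w = S.r + 1 ∧ Q w) =
      ((Finset.Icc 1 S.n).filter fun p => Q (S.fresh p (S.topIdx p))).image
        fun p => S.fresh p (S.topIdx p) := by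
    ext w
    simp only [Finset.mem_filter, Finset.mem_image, Finset.mem_Icc]
    constructor
    · rintro ⟨hw, -, hr, hQ⟩
      obtain ⟨p, hp1, hpn, rfl⟩ := S.eq_top_of_ext_round hw hr
      exact ⟨p, ⟨⟨hp1, hpn⟩, hQ⟩, rfl⟩
    · rintro ⟨p, ⟨⟨hp1, hpn⟩, hQ⟩, rfl⟩
      have htop := S.slot_topIdx hp1 hpn
      exact ⟨S.fresh_mem_ext htop, (S.ext_witness_fresh_iff htop).2 rfl,
        by rw [S.ext_round_fresh htop, if_pos rfl], hQ⟩
  rw [himage, Finset.card_image_of_injOn]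
  intro p hp q hq h
  simp only [Finset.coe_filter, Finset.mem_Icc, Set.mem_ofPred_eq] at hp hq
  exact (S.fresh_inj (S.slot_topIdx hp.1.1 hp.1.2) (S.slot_topIdx hq.1.1 hq.1.2) h).1

theorem card_yes_tops :
    (S.ext.events.filter fun w =>
      S.ext.Witness w ∧ S.ext.round w = S.r + 1 ∧ S.ext.Ancestor S.x w).card = S.n / 2 := by
  rw [S.card_filter_tops, ← S.yesParties_card]
  congr 1
  ext p
  simp only [Finset.mem_filter, Finset.mem_Icc]
  exact ⟨fun h => (S.x_ancestor_top_iff h.1.1 h.1.2).1 h.2, fun h =>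
    have hp := Finset.mem_Icc.1 (S.yesParties_subset h)
    ⟨hp, (S.x_ancestor_top_iff hp.1 hp.2).2 h⟩⟩

theorem card_no_tops :
    (S.ext.events.filter fun w =>
      S.ext.Witness w ∧ S.ext.round w = S.r + 1 ∧ ¬ S.ext.Ancestor S.x w).card =
        S.n - S.n / 2 := by
  convert S.card_filter_tops (fun w => ¬ S.ext.Ancestor S.x w) using 2
  · ext; simp only [Finset.mem_filter]
  calc S.n - S.n / 2 = (Finset.Icc 1 S.n \ S.yesParties).card := by
        rw [Finset.card_sdiff_of_subset S.yesParties_subset, Nat.card_Icc, S.yesParties_card,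
          Nat.add_sub_cancel]
    _ = _ := by
        congr 1
        ext p
        simp only [Finset.mem_filter, Finset.mem_sdiff]
        exact and_congr_right fun hp => not_congr
          (S.x_ancestor_top_iff (Finset.mem_Icc.1 hp).1 (Finset.mem_Icc.1 hp).2).symm

theorem ext_vote_x {w : E} (hw : w ∈ S.ext.events) (hww : S.ext.Witness w)
    (hr : S.ext.round w = S.r + 1) : S.ext.vote w S.x = decide (S.ext.Ancestor S.x w) := by
  have hxr : S.ext.round S.x = S.r := by rw [S.extends_ext.round_eq S.x_mem, S.x_round]
  rw [S.valid_ext.vote_first S.x (S.extends_ext.1 S.x_mem)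
    ((S.extends_ext.witness_iff S.valid S.x_mem).2 S.x_witness) w hw hww (by rw [hr, hxr]),
    S.ext_sees_iff hw]

end Setup

theorem exists_fresh {E : Type} [Nonempty E] {creator : E → ℕ} {n : ℕ}
    (hinf : ∀ p, 1 ≤ p → p ≤ n → {e : E | creator e = p}.Infinite) (s : Finset E) :
    ∃ F : ℕ → ℕ → E, (∀ p, 1 ≤ p → p ≤ n → ∀ i, creator (F p i) = p) ∧
      (∀ p, 1 ≤ p → p ≤ n → ∀ i, F p i ∉ s) ∧
      (∀ p, 1 ≤ p → p ≤ n → Function.Injective (F p)) := by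
  have : ∀ p, ∃ g : ℕ → E, 1 ≤ p → p ≤ n →
      (∀ i, creator (g i) = p ∧ g i ∉ s) ∧ Function.Injective g := by
    intro p
    by_cases hp : 1 ≤ p ∧ p ≤ n
    · let emb := ((hinf p hp.1 hp.2).sdiff s.finite_toSet).natEmbedding
      exact ⟨fun i => (emb i).1, fun _ _ =>
        ⟨fun i => (emb i).2, fun i j hij => emb.injective (Subtype.ext hij)⟩⟩
    · exact ⟨fun _ => Classical.arbitrary E, fun h1 h2 => absurd ⟨h1, h2⟩ hp⟩
  choose F hF using this
  exact ⟨F, fun p h1 h2 i => ((hF p h1 h2).1 i).1, fun p h1 h2 i => ((hF p h1 h2).1 i).2,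
    fun p h1 h2 => (hF p h1 h2).2⟩

end DelayAttack

theorem stmt14_general {E : Type} (creator sig ts : E → ℕ) (n c r : ℕ)
    (hn : 7 ≤ n)
    (hplenty : ∀ p, 1 ≤ p → p ≤ n → {e : E | creator e = p}.Infinite)
    (H : Hashgraph E) (hH : H.Valid creator sig ts n c) (hff : ForkFree creator H)
    (hmax : ∀ e ∈ H.events, H.round e ≤ r)
    (huniq : ∀ p, 1 ≤ p → p ≤ n →
      ∃! w, w ∈ H.events ∧ H.Witness w ∧ H.round w = r ∧ creator w = p)
    (htop : ∀ w ∈ H.events, H.Witness w → H.round w = r →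
      ∀ e ∈ H.events, creator e = creator w → H.Ancestor w e → e = w)
    (hnoanc : ∀ w ∈ H.events, H.Witness w → H.round w = r →
      ∀ w' ∈ H.events, H.Witness w' → H.round w' = r → H.Ancestor w w' → w = w')
    (x : E) (hx : x ∈ H.events) (hxw : H.Witness x) (hxr : H.round x = r)
    (hxc : creator x = 1) :
    ∃ H' : Hashgraph E,
      H'.Valid creator sig ts n c ∧ ForkFree creator H' ∧ Extends H' H ∧
      (∀ p, 1 ≤ p → p ≤ n →
        ∃! w, w ∈ H'.events ∧ H'.Witness w ∧ H'.round w = r + 1 ∧ creator w = p) ∧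
      (∀ w ∈ H'.events, H'.Witness w → H'.round w = r + 1 →
        ∀ w' ∈ H'.events, H'.Witness w' → H'.round w' = r + 1 →
          H'.Ancestor w w' → w = w') ∧
      (H'.events.filter
        (fun w => H'.Witness w ∧ H'.round w = r + 1 ∧ H'.Ancestor x w)).card = n / 2 ∧
      (H'.events.filter
        (fun w => H'.Witness w ∧ H'.round w = r + 1 ∧ ¬ H'.Ancestor x w)).card = n - n / 2 ∧
      (∀ w ∈ H'.events, H'.Witness w → H'.round w = r + 1 →
        (H'.Ancestor x w → H'.vote w x = true) ∧
        (¬ H'.Ancestor x w → H'.vote w x = false)) := by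
  have : Nonempty E := ⟨x⟩
  obtain ⟨F, hFc, hFs, hFi⟩ := DelayAttack.exists_fresh hplenty H.events
  let S : DelayAttack.Setup E := ⟨creator, sig, ts, n, c, r, H, x, F, hn, hH, hff, hmax, huniq,
    htop, hnoanc, hx, hxw, hxr, hxc, hFc, hFs, hFi⟩
  refine ⟨S.ext, S.valid_ext, S.forkFree_ext, S.extends_ext, fun p => S.existsUnique_top,
    fun w hw _ hr w' hw' _ hr' => S.top_antichain hw hr hw' hr', S.card_yes_tops,
    S.card_no_tops, fun w hw hww hr => ?_⟩
  rw [S.ext_vote_x hw hww hr]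
  exact ⟨decide_eq_true, decide_eq_false⟩

/-- Base case of the delay attack: from a fork-free hashgraph whose maximal round is
`r`, in which each party has exactly one round-`r` witness, round-`r` witnesses have
no proper same-creator descendants and do not see each other, and `x` is party 1's
round-`r` witness, the adversary can build a fork-free extension in which each party
has exactly one round-`(r+1)` witness, no round-`(r+1)` witness is an ancestor of
another, exactly `⌊n/2⌋` of them have `x` as an ancestor (and hence vote yes in
`x`'s election) while the remaining `n - ⌊n/2⌋` do not (and hence vote no). -/
theorem stmt14 {E : Type} [DecidableEq E] (creator sig ts : E → ℕ) (n c r : ℕ)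
    (hn : 7 ≤ n)
    (hplenty : ∀ p, 1 ≤ p → p ≤ n → {e : E | creator e = p}.Infinite)
    (H : Hashgraph E) (hH : H.Valid creator sig ts n c) (hff : ForkFree creator H)
    (hmax : ∀ e ∈ H.events, H.round e ≤ r)
    (huniq : ∀ p, 1 ≤ p → p ≤ n →
      ∃! w, w ∈ H.events ∧ H.Witness w ∧ H.round w = r ∧ creator w = p)
    (htop : ∀ w ∈ H.events, H.Witness w → H.round w = r →
      ∀ e ∈ H.events, creator e = creator w → H.Ancestor w e → e = w)
    (hnoanc : ∀ w ∈ H.events, H.Witness w → H.round w = r →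
      ∀ w' ∈ H.events, H.Witness w' → H.round w' = r → H.Ancestor w w' → w = w')
    (x : E) (hx : x ∈ H.events) (hxw : H.Witness x) (hxr : H.round x = r)
    (hxc : creator x = 1) :
    ∃ H' : Hashgraph E,
      H'.Valid creator sig ts n c ∧ ForkFree creator H' ∧ Extends H' H ∧
      (∀ p, 1 ≤ p → p ≤ n →
        ∃! w, w ∈ H'.events ∧ H'.Witness w ∧ H'.round w = r + 1 ∧ creator w = p) ∧
      (∀ w ∈ H'.events, H'.Witness w → H'.round w = r + 1 →
        ∀ w' ∈ H'.events, H'.Witness w' → H'.round w' = r + 1 →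
          H'.Ancestor w w' → w = w') ∧
      (H'.events.filter
        (fun w => H'.Witness w ∧ H'.round w = r + 1 ∧ H'.Ancestor x w)).card = n / 2 ∧
      (H'.events.filter
        (fun w => H'.Witness w ∧ H'.round w = r + 1 ∧ ¬ H'.Ancestor x w)).card = n - n / 2 ∧
      (∀ w ∈ H'.events, H'.Witness w → H'.round w = r + 1 →
        (H'.Ancestor x w → H'.vote w x = true) ∧
        (¬ H'.Ancestor x w → H'.vote w x = false)) :=
  stmt14_general creator sig ts n c r hn hplenty H hH hff hmax huniq htop hnoanc x hx hxw hxr hxc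
end
end
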